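/- arXiv:2006.10519 — 9 statements merged into one kernel-verified Lean document; each statement's English description precedes it below -/
import Mathlib

section
/- Let L be a nonempty finite generic contact system of line segments in ℝ². Then the intersection graph of L is (2,3)-sparse; explicitly, for every subset L′ ⊆ L that contains at least one contact (i.e. some endpoint of a segment of L′ lies in the interior of a segment of L′), the number of contacts of L′ — that is, the number of pairs (x, m) with m ∈ L′ and x an endpoint of a segment of L′ lying in the interior of m — is at most 2|L′| − 3. -/
noncomputable section

/-- The Euclidean plane. -/
abbrev Pt := EuclideanSpace ℝ (Fin 2)

/-- `S` is a (nondegenerate, closed) line segment in the plane. -/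
def IsSeg (S : Set Pt) : Prop := ∃ p q : Pt, p ≠ q ∧ S = segment ℝ p q

/-- `x` is an endpoint of the segment `S`. -/
def IsEndpt (x : Pt) (S : Set Pt) : Prop :=
  ∃ p q : Pt, p ≠ q ∧ S = segment ℝ p q ∧ (x = p ∨ x = q)

/-- `x` is an interior (relative interior) point of the segment `S`. -/
def IsIntPt (x : Pt) (S : Set Pt) : Prop :=
  ∃ p q : Pt, p ≠ q ∧ S = segment ℝ p q ∧ x ∈ openSegment ℝ p q

/-- A contact system: a collection of (pairwise distinct) segments such that no
point of the plane is an interior point of more than one segment. -/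
def IsContactSystem (L : Set (Set Pt)) : Prop :=
  (∀ S ∈ L, IsSeg S) ∧
  ∀ x : Pt, ∀ S ∈ L, ∀ T ∈ L, IsIntPt x S → IsIntPt x T → S = T

/-- A 2-contact system: a contact system such that every point of the plane
belongs to at most two of the segments. -/
def Is2ContactSystem (L : Set (Set Pt)) : Prop :=
  IsContactSystem L ∧
  ∀ x : Pt, ∀ S ∈ L, ∀ T ∈ L, ∀ U ∈ L,
    x ∈ S → x ∈ T → x ∈ U → (S = T ∨ S = U ∨ T = U)

/-- A generic contact system: a contact system such that moreover no point of
the plane is an endpoint of more than one segment. -/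
def IsGenericCS (L : Set (Set Pt)) : Prop :=
  IsContactSystem L ∧
  ∀ x : Pt, ∀ S ∈ L, ∀ T ∈ L, IsEndpt x S → IsEndpt x T → S = T

/-- `x` is a free endpoint of the family `M`: an endpoint of some segment of `M`
that lies in the interior of no segment of `M`. -/
def IsFreeEndpt (x : Pt) (M : Set (Set Pt)) : Prop :=
  (∃ l ∈ M, IsEndpt x l) ∧ ∀ m ∈ M, ¬ IsIntPt x m

/-- The group of isometries of the plane (every isometry of the plane is affine). -/
abbrev Iso2 := Pt ≃ᵃⁱ[ℝ] Pt

/-- The determinant of the linear part of a plane isometry. -/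
def detOf (g : Iso2) : ℝ :=
  LinearMap.det g.linearIsometryEquiv.toLinearEquiv.toLinearMap

/-- A rotation: a non-identity orientation-preserving isometry with a fixed point. -/
def IsRotation (g : Iso2) : Prop := g ≠ 1 ∧ detOf g = 1 ∧ ∃ x : Pt, g x = x

/-- A reflection: an orientation-reversing isometry with a fixed point. -/
def IsReflection (g : Iso2) : Prop := detOf g ≠ 1 ∧ ∃ x : Pt, g x = x

/-- A translation: the map `x ↦ x + v` for some `v ≠ 0`. -/
def IsTranslation (g : Iso2) : Prop := ∃ v : Pt, v ≠ 0 ∧ ∀ x : Pt, g x = x + v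

/-- (S1): the collection `L` of segments is invariant under `Γ`. -/
def SatS1 (Γ : Subgroup Iso2) (L : Set (Set Pt)) : Prop :=
  ∀ l ∈ L, ∀ g ∈ Γ, (⇑g) '' l ∈ L

/-- (S2): `L` has finitely many `Γ`-orbits. -/
def SatS2 (Γ : Subgroup Iso2) (L : Set (Set Pt)) : Prop :=
  ∃ T : Set (Set Pt), T.Finite ∧ T ⊆ L ∧
    ∀ l ∈ L, ∃ t ∈ T, ∃ g ∈ Γ, (⇑g) '' t = l

/-- (S4): for every `l ∈ L` and every `x ∈ l` the stabiliser of `x` in `Γ` is trivial. -/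
def SatS4 (Γ : Subgroup Iso2) (L : Set (Set Pt)) : Prop :=
  ∀ l ∈ L, ∀ x ∈ l, ∀ g ∈ Γ, g x = x → g = 1

/-- A subgroup of the isometry group of the plane is discrete iff (equivalently,
for subgroups of `Isom(ℝ²)`, in the natural topology) each of its orbits is a
discrete subset of the plane. -/
def IsDiscreteSubgrp (Γ : Subgroup Iso2) : Prop :=
  ∀ x : Pt, DiscreteTopology {y : Pt | ∃ g ∈ Γ, g x = y}

/-- A generic `Γ`-symmetric contact system: satisfies (S1)-(S4). -/
def IsGenSymmCS (Γ : Subgroup Iso2) (L : Set (Set Pt)) : Prop :=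
  IsGenericCS L ∧ SatS1 Γ L ∧ SatS2 Γ L ∧ SatS4 Γ L

end

/-- The contacts of a family `L'` of segments: pairs `(x, m)` where `m ∈ L'`
and `x` is an endpoint of some segment of `L'` lying in the interior of `m`. -/
def contactsOf (L' : Set (Set Pt)) : Set (Pt × Set Pt) :=
  {c | c.2 ∈ L' ∧ (∃ l ∈ L', IsEndpt c.1 l) ∧ IsIntPt c.1 c.2}

/-! A contact `(x, m)` is determined by `x`, because `x` is interior to at most one segment; so
the contacts inject into the endpoints, of which there are at most `2|L'|`. No extreme point of
the convex hull of the endpoints is interior to a segment, hence none is a contact point, and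
there are at least three of them: otherwise all segments lie on one line, where an endpoint
interior to a segment would give two segments with a common interior point. -/

open Set Filter Topology

section Convex

variable {E : Type*} [AddCommGroup E] [Module ℝ E]

theorem left_mem_extremePoints_segment (a b : E) : a ∈ (segment ℝ a b).extremePoints ℝ := by
  rw [(convex_segment a b).mem_extremePoints_iff_convex_sdiff]
  refine ⟨left_mem_segment ℝ a b, ?_⟩
  rcases eq_or_ne a b with rfl | hab
  · simpa using convex_empty
  · have : segment ℝ a b \ {a} = AffineMap.lineMap a b '' Ioc (0 : ℝ) 1 := by
      rw [segment_eq_image_lineMap, ← Icc_sdiff_left,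
        image_sdiff (AffineMap.lineMap_injective ℝ hab), image_singleton,
        AffineMap.lineMap_apply_zero]
    rw [this]
    exact (convex_Ioc 0 1).affine_image _

theorem extremePoints_segment_subset (a b : E) : (segment ℝ a b).extremePoints ℝ ⊆ {a, b} := by
  rw [← convexHull_pair]
  exact extremePoints_convexHull_subset

theorem exists_mem_openSegment_inter {F : Type*} [TopologicalSpace F] [AddCommGroup F]
    [Module ℝ F] [IsTopologicalAddGroup F] [ContinuousSMul ℝ F] {U : Set F} (hU : IsOpen U)
    {a : F} (ha : a ∈ U) (b : F) : (openSegment ℝ a b ∩ U).Nonempty := by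
  have hU' : ∀ᶠ t in 𝓝[>] (0 : ℝ), AffineMap.lineMap a b t ∈ U :=
    nhdsWithin_le_nhds (AffineMap.lineMap_continuous.continuousAt.preimage_mem_nhds
      (by simpa using hU.mem_nhds ha))
  have h01 : ∀ᶠ t in 𝓝[>] (0 : ℝ), t ∈ Ioo 0 1 := Ioo_mem_nhdsGT zero_lt_one
  obtain ⟨t, ht01, htU⟩ := (h01.and hU').exists
  exact ⟨_, by rw [openSegment_eq_image_lineMap]; exact mem_image_of_mem _ ht01, htU⟩

theorem exists_mem_openSegment_inter_openSegment {u v p q a b : E} (hp : p ∈ segment ℝ u v)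
    (hq : q ∈ segment ℝ u v) (hb : b ∈ segment ℝ u v) (hpq : p ≠ q)
    (ha : a ∈ openSegment ℝ p q) : (openSegment ℝ a b ∩ openSegment ℝ p q).Nonempty := by
  set f : ℝ →ᵃ[ℝ] E := AffineMap.lineMap u v
  rw [segment_eq_image_lineMap] at hp hq hb
  obtain ⟨tp, -, rfl⟩ := hp
  obtain ⟨tq, -, rfl⟩ := hq
  obtain ⟨tb, -, rfl⟩ := hb
  rw [← image_openSegment] at ha
  obtain ⟨ta, hta, rfl⟩ := ha
  have htpq : tp ≠ tq := fun h ↦ hpq (congrArg f h)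
  have hopen : IsOpen (openSegment ℝ tp tq) := by
    rw [openSegment_eq_Ioo' htpq]
    exact isOpen_Ioo
  obtain ⟨t, ht, ht'⟩ := exists_mem_openSegment_inter hopen hta tb
  exact ⟨f t, by rw [← image_openSegment]; exact mem_image_of_mem f ht,
    by rw [← image_openSegment]; exact mem_image_of_mem f ht'⟩

end Convex

theorem Set.exists_subset_pair_of_ncard_le_two {α : Type*} [Nonempty α] {s : Set α}
    (hs : s.Finite) (h : s.ncard ≤ 2) : ∃ u v, s ⊆ {u, v} := by
  interval_cases hn : s.ncard
  · obtain rfl := (ncard_eq_zero hs).mp hn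
    exact ⟨Classical.ofNonempty, Classical.ofNonempty, empty_subset _⟩
  · obtain ⟨u, rfl⟩ := ncard_eq_one.mp hn
    exact ⟨u, u, by simp⟩
  · obtain ⟨u, v, -, rfl⟩ := ncard_eq_two.mp hn
    exact ⟨u, v, subset_rfl⟩

theorem subset_segment_of_extremePoints_subset {E : Type*} [AddCommGroup E] [Module ℝ E]
    [TopologicalSpace E] [T2Space E] [IsTopologicalAddGroup E] [ContinuousSMul ℝ E]
    [LocallyConvexSpace ℝ E] {s : Set E} (hs : IsCompact s) (hsc : Convex ℝ s) {u v : E}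
    (h : s.extremePoints ℝ ⊆ {u, v}) : s ⊆ segment ℝ u v := by
  rw [← closure_convexHull_extremePoints hs hsc, ← convexHull_pair]
  exact closure_minimal (convexHull_mono h) ((toFinite _).isCompact_convexHull ℝ |>.isClosed)

section Segments

variable {x : Pt} {S A : Set Pt}

theorem IsEndpt.mem_extremePoints (h : IsEndpt x S) : x ∈ S.extremePoints ℝ := by
  obtain ⟨p, q, -, rfl, rfl | rfl⟩ := h
  · exact left_mem_extremePoints_segment x q
  · rw [segment_symm]
    exact left_mem_extremePoints_segment x p

theorem IsIntPt.notMem_extremePoints (h : IsIntPt x S) (hSA : S ⊆ A) :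
    x ∉ A.extremePoints ℝ := by
  obtain ⟨p, q, hpq, rfl, hx⟩ := h
  intro hext
  obtain ⟨rfl, rfl⟩ := (mem_extremePoints.mp hext).2 p (hSA (left_mem_segment ℝ p q)) q
    (hSA (right_mem_segment ℝ p q)) hx
  exact hpq rfl

theorem IsEndpt.not_isIntPt (h : IsEndpt x S) : ¬ IsIntPt x S :=
  fun hi ↦ hi.notMem_extremePoints subset_rfl h.mem_extremePoints

theorem IsSeg.exists_setOf_isEndpt_subset_pair (h : IsSeg S) :
    ∃ p q, {x | IsEndpt x S} ⊆ {p, q} := by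
  obtain ⟨p, q, -, rfl⟩ := h
  exact ⟨p, q, fun x hx ↦ extremePoints_segment_subset p q (IsEndpt.mem_extremePoints hx)⟩

theorem IsSeg.finite_setOf_isEndpt (h : IsSeg S) : {x | IsEndpt x S}.Finite := by
  obtain ⟨p, q, hpq⟩ := h.exists_setOf_isEndpt_subset_pair
  exact (toFinite _).subset hpq

theorem IsSeg.ncard_setOf_isEndpt_le (h : IsSeg S) : {x | IsEndpt x S}.ncard ≤ 2 := by
  obtain ⟨p, q, hpq⟩ := h.exists_setOf_isEndpt_subset_pair
  calc _ ≤ ({p, q} : Set Pt).ncard := ncard_le_ncard hpq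
    _ ≤ 2 := (ncard_insert_le p {q}).trans (by simp)

end Segments

def endptsOf (M : Set (Set Pt)) : Set Pt := ⋃ l ∈ M, {x | IsEndpt x l}

theorem mem_endptsOf {x : Pt} {M : Set (Set Pt)} : x ∈ endptsOf M ↔ ∃ l ∈ M, IsEndpt x l := by
  simp [endptsOf]

section Families

variable {M : Set (Set Pt)}

theorem finite_endptsOf (hM : M.Finite) (hseg : ∀ l ∈ M, IsSeg l) : (endptsOf M).Finite :=
  hM.biUnion fun l hl ↦ (hseg l hl).finite_setOf_isEndpt

theorem ncard_endptsOf_le (hM : M.Finite) (hseg : ∀ l ∈ M, IsSeg l) :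
    (endptsOf M).ncard ≤ 2 * M.ncard := by
  have hunion : endptsOf M = ⋃ l ∈ hM.toFinset, {x | IsEndpt x l} := by simp [endptsOf]
  calc (endptsOf M).ncard ≤ ∑ l ∈ hM.toFinset, {x | IsEndpt x l}.ncard :=
        hunion ▸ Finset.set_ncard_biUnion_le _ _
    _ ≤ ∑ _l ∈ hM.toFinset, 2 :=
        Finset.sum_le_sum fun l hl ↦ (hseg l (hM.mem_toFinset.mp hl)).ncard_setOf_isEndpt_le
    _ = 2 * M.ncard := by rw [Finset.sum_const, ncard_eq_toFinset_card M hM, smul_eq_mul, mul_comm]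

theorem subset_convexHull_endptsOf {l : Set Pt} (hl : l ∈ M) (hseg : IsSeg l) :
    l ⊆ convexHull ℝ (endptsOf M) := by
  obtain ⟨p, q, hpq, rfl⟩ := hseg
  have hp : p ∈ endptsOf M := mem_endptsOf.mpr ⟨_, hl, p, q, hpq, rfl, Or.inl rfl⟩
  have hq : q ∈ endptsOf M := mem_endptsOf.mpr ⟨_, hl, p, q, hpq, rfl, Or.inr rfl⟩
  exact (convex_convexHull ℝ _).segment_subset (subset_convexHull ℝ _ hp)
    (subset_convexHull ℝ _ hq)

end Families

namespace IsContactSystem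

variable {L M : Set (Set Pt)}

theorem mono (h : IsContactSystem L) (hM : M ⊆ L) : IsContactSystem M :=
  ⟨fun S hS ↦ h.1 S (hM hS), fun x S hS T hT ↦ h.2 x S (hM hS) T (hM hT)⟩

theorem injOn_fst_contactsOf (h : IsContactSystem M) : InjOn Prod.fst (contactsOf M) := by
  rintro ⟨x, m⟩ hm ⟨x', m'⟩ hm' (rfl : x = x')
  rw [h.2 x m hm.1 m' hm'.1 hm.2.2 hm'.2.2]

theorem not_isIntPt_of_subset_segment (h : IsContactSystem M) {l m : Set Pt} (hl : l ∈ M)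
    (hm : m ∈ M) {u v : Pt} (hlu : l ⊆ segment ℝ u v) (hmu : m ⊆ segment ℝ u v) {x : Pt}
    (hx : IsEndpt x l) : ¬ IsIntPt x m := by
  rintro hxm
  obtain ⟨p, q, hpq, rfl, hxpq⟩ := id hxm
  obtain ⟨b, hxb, rfl⟩ : ∃ b, x ≠ b ∧ l = segment ℝ x b := by
    obtain ⟨a, b, hab, rfl, rfl | rfl⟩ := id hx
    exacts [⟨b, hab, rfl⟩, ⟨a, hab.symm, segment_symm ℝ a x⟩]
  obtain ⟨z, hzl, hzm⟩ := exists_mem_openSegment_inter_openSegment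
    (hmu (left_mem_segment ℝ p q)) (hmu (right_mem_segment ℝ p q))
    (hlu (right_mem_segment ℝ x b)) hpq hxpq
  have hlm : segment ℝ x b = segment ℝ p q :=
    h.2 z _ hl _ hm ⟨x, b, hxb, rfl, hzl⟩ ⟨p, q, hpq, rfl, hzm⟩
  exact hx.not_isIntPt (hlm ▸ hxm)

theorem three_le_ncard_extremePoints (h : IsContactSystem M) (hM : M.Finite)
    (hc : (contactsOf M).Nonempty) :
    3 ≤ ((convexHull ℝ (endptsOf M)).extremePoints ℝ).ncard := by
  have hfin := finite_endptsOf hM h.1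
  by_contra! hlt
  obtain ⟨u, v, huv⟩ := exists_subset_pair_of_ncard_le_two
    (hfin.subset extremePoints_convexHull_subset) (Nat.le_of_lt_succ hlt)
  have hline : ∀ l ∈ M, l ⊆ segment ℝ u v := fun l hl ↦
    (subset_convexHull_endptsOf hl (h.1 l hl)).trans <|
      subset_segment_of_extremePoints_subset (hfin.isCompact_convexHull ℝ)
        (convex_convexHull ℝ _) huv
  obtain ⟨⟨x, m⟩, hm, ⟨l, hl, hx⟩, hxm⟩ := hc
  exact h.not_isIntPt_of_subset_segment hl hm (hline l hl) (hline m hm) hx hxm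

theorem ncard_contactsOf_add_three_le (h : IsContactSystem M) (hM : M.Finite)
    (hc : (contactsOf M).Nonempty) : (contactsOf M).ncard + 3 ≤ 2 * M.ncard := by
  set X := (convexHull ℝ (endptsOf M)).extremePoints ℝ
  set A := Prod.fst '' contactsOf M
  have hfin := finite_endptsOf hM h.1
  have hA : A ⊆ endptsOf M := by
    rintro _ ⟨c, hc, rfl⟩
    exact mem_endptsOf.mpr hc.2.1
  have hX : X ⊆ endptsOf M := extremePoints_convexHull_subset
  have hAX : Disjoint A X := by
    rw [disjoint_left]
    rintro _ ⟨c, hc, rfl⟩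
    exact hc.2.2.notMem_extremePoints (subset_convexHull_endptsOf hc.1 (h.1 _ hc.1))
  calc (contactsOf M).ncard + 3 ≤ A.ncard + X.ncard := by
        rw [h.injOn_fst_contactsOf.ncard_image]
        exact Nat.add_le_add_left (h.three_le_ncard_extremePoints hM hc) _
    _ = (A ∪ X).ncard := (ncard_union_eq hAX (hfin.subset hA) (hfin.subset hX)).symm
    _ ≤ (endptsOf M).ncard := ncard_le_ncard (union_subset hA hX) hfin
    _ ≤ 2 * M.ncard := ncard_endptsOf_le hM h.1

end IsContactSystem

theorem stmt_1_general (L : Set (Set Pt)) (hfin : L.Finite)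
    (hL : IsGenericCS L) :
    ∀ L' ⊆ L, (contactsOf L').Nonempty →
      (contactsOf L').ncard + 3 ≤ 2 * L'.ncard :=
  fun L' hL' hc ↦ (hL.1.mono hL').ncard_contactsOf_add_three_le (hfin.subset hL') hc

/-- The intersection graph of a nonempty finite generic
contact system is (2,3)-sparse: every subfamily `L' ⊆ L` with at least one
contact has at most `2|L'| - 3` contacts. -/
theorem stmt_1 (L : Set (Set Pt)) (hfin : L.Finite) (hne : L.Nonempty)
    (hL : IsGenericCS L) :
    ∀ L' ⊆ L, (contactsOf L').Nonempty →
      (contactsOf L').ncard + 3 ≤ 2 * L'.ncard :=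
  stmt_1_general L hfin hL
end

section
/- Every nonempty finite generic contact system L of line segments in ℝ² has at least two distinct free endpoints, i.e. at least two distinct points that are endpoints of segments of L and do not lie in the interior of any segment of L. -/
private lemma comb_zero {u v : Pt} {a b : ℝ} (huv : u ≠ v) (hab : a + b = 1)
    (h : a • u + b • v = u) : b = 0 := by
  have h2 : b • (v - u) = 0 := by linear_combination (norm := module) h - hab • u
  rcases smul_eq_zero.mp h2 with h3 | h3
  · exact h3
  · exact absurd (sub_eq_zero.mp h3).symm huv

private lemma endpt_cases {p q p' q' : Pt} (hpq : p ≠ q) (hpq' : p' ≠ q')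
    (hseg : segment ℝ p q = segment ℝ p' q') : p' = p ∨ p' = q := by
  by_contra hcon
  push_neg at hcon
  have hp'mem : p' ∈ segment ℝ p q := hseg ▸ left_mem_segment ℝ p' q'
  rw [← insert_endpoints_openSegment] at hp'mem
  rcases hp'mem with h | h | h
  · exact hcon.1 h
  · exact hcon.2 h
  obtain ⟨a, b, ha, hb, hab, hp'⟩ := h
  have hpmem : p ∈ segment ℝ p' q' := hseg ▸ left_mem_segment ℝ p q
  have hqmem : q ∈ segment ℝ p' q' := hseg ▸ right_mem_segment ℝ p q
  obtain ⟨cc, d, hc0, hd0, hcd, hp⟩ := hpmem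
  obtain ⟨e, g, he0, hg0, heg, hq⟩ := hqmem
  have hkey : (a * cc + b * e) • p' + (a * d + b * g) • q' = p' := by
    linear_combination (norm := module) a • hp + b • hq + hp'
  have hsum : (a * cc + b * e) + (a * d + b * g) = 1 := by nlinarith
  have hzero : a * d + b * g = 0 := comb_zero hpq' hsum hkey
  have hd : d = 0 := by nlinarith
  have hg : g = 0 := by nlinarith
  have hc1 : cc = 1 := by linarith
  have he1 : e = 1 := by linarith
  have hpp : p = p' := by rw [← hp, hc1, hd]; simp
  have hqp : q = p' := by rw [← hq, he1, hg]; simp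
  exact hpq (hpp.trans hqp.symm)

private lemma free_of_opt (L : Set (Set Pt)) (hseg : ∀ S ∈ L, IsSeg S) (f : Pt → ℝ)
    (hlin : ∀ (a b : ℝ) (u v : Pt), a + b = 1 → f (a • u + b • v) = a * f u + b * f v)
    (hinj : ∀ S ∈ L, ∀ p q : Pt, p ≠ q → S = segment ℝ p q → f p ≠ f q)
    (x : Pt) (hxK : x ∈ ⋃₀ L) (hopt : ∀ z ∈ ⋃₀ L, f z ≤ f x) : IsFreeEndpt x L := by
  have hnoint : ∀ m ∈ L, ¬ IsIntPt x m := by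
    rintro m hm ⟨p, q, hpq, rfl, hxo⟩
    obtain ⟨a, b, ha, hb, hab, hx⟩ := hxo
    have hp : f p ≤ f x := hopt p ⟨_, hm, left_mem_segment ℝ p q⟩
    have hq : f q ≤ f x := hopt q ⟨_, hm, right_mem_segment ℝ p q⟩
    have hfx : f x = a * f p + b * f q := by rw [← hx]; exact hlin a b p q hab
    have hne := hinj _ hm p q hpq rfl
    rcases hne.lt_or_gt with h | h
    · have h4 : f x < f q := by
        calc f x = a * f p + b * f q := hfx
        _ < a * f q + b * f q := by nlinarith [mul_lt_mul_of_pos_left h ha]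
        _ = (a + b) * f q := by ring
        _ = f q := by rw [hab, one_mul]
      exact absurd hq (not_le.mpr h4)
    · have h4 : f x < f p := by
        calc f x = a * f p + b * f q := hfx
        _ < a * f p + b * f p := by nlinarith [mul_lt_mul_of_pos_left h hb]
        _ = (a + b) * f p := by ring
        _ = f p := by rw [hab, one_mul]
      exact absurd hp (not_le.mpr h4)
  obtain ⟨S, hS, hxS⟩ := hxK
  obtain ⟨p, q, hpq, rfl⟩ := hseg S hS
  refine ⟨⟨_, hS, p, q, hpq, rfl, ?_⟩, hnoint⟩
  rw [← insert_endpoints_openSegment] at hxS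
  rcases hxS with h | h | h
  · exact Or.inl h
  · exact Or.inr h
  · exact absurd ⟨p, q, hpq, rfl, h⟩ (hnoint _ hS)

/-- Every nonempty finite generic contact system has at least
two distinct free endpoints. -/
theorem stmt_2 (L : Set (Set Pt)) (hfin : L.Finite) (hne : L.Nonempty)
    (hL : IsGenericCS L) :
    ∃ p q : Pt, p ≠ q ∧ IsFreeEndpt p L ∧ IsFreeEndpt q L := by
  obtain ⟨⟨hseg, hint⟩, hgen⟩ := hL
  -- the (finite) set of endpoints
  set E : Set Pt := {x | ∃ S ∈ L, IsEndpt x S} with hE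
  have hEfin : E.Finite := by
    have hsub : E ⊆ ⋃ S ∈ L, {x | IsEndpt x S} := by
      rintro x ⟨S, hS, hx⟩; exact Set.mem_biUnion hS hx
    refine Set.Finite.subset (Set.Finite.biUnion hfin ?_) hsub
    intro S hS
    obtain ⟨p, q, hpq, rfl⟩ := hseg S hS
    refine Set.Finite.subset ((Set.finite_singleton q).insert p) ?_
    rintro x ⟨p', q', hpq', hseg', (rfl | rfl)⟩
    · rcases endpt_cases hpq hpq' hseg' with h | h <;> simp [h]
    · rcases endpt_cases hpq hpq'.symm (hseg'.trans (segment_symm ℝ p' x)) with h | h <;>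
        simp [h]
  -- choose a generic linear functional
  have hBfin : ((fun pq : Pt × Pt =>
      -(pq.1 0 - pq.2 0) / (pq.1 1 - pq.2 1)) '' (E ×ˢ E)).Finite :=
    (hEfin.prod hEfin).image _
  obtain ⟨c, hc⟩ := hBfin.infinite_compl.nonempty
  set f : Pt → ℝ := fun x => x 0 + c * x 1 with hf
  have hinjE : ∀ p ∈ E, ∀ q ∈ E, p ≠ q → f p ≠ f q := by
    intro p hp q hq hne heq
    simp only [hf] at heq
    by_cases h1 : p 1 = q 1
    · have h0 : p 0 = q 0 := by rw [h1] at heq; linarith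
      refine hne ?_
      ext i
      fin_cases i
      · exact h0
      · exact h1
    · have hcval : c = -(p 0 - q 0) / (p 1 - q 1) := by
        rw [eq_div_iff (sub_ne_zero.mpr h1)]
        linear_combination heq
      exact hc ⟨(p, q), ⟨hp, hq⟩, hcval.symm⟩
  have hlin : ∀ (a b : ℝ) (u v : Pt), a + b = 1 → f (a • u + b • v) = a * f u + b * f v := by
    intro a b u v _
    simp only [hf, PiLp.add_apply, PiLp.smul_apply, smul_eq_mul]
    ring
  have hinjL : ∀ S ∈ L, ∀ p q : Pt, p ≠ q → S = segment ℝ p q → f p ≠ f q := by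
    intro S hS p q hpq hSeq
    exact hinjE p ⟨S, hS, p, q, hpq, hSeq, Or.inl rfl⟩ q ⟨S, hS, p, q, hpq, hSeq, Or.inr rfl⟩ hpq
  -- compactness of the union
  have hKcomp : IsCompact (⋃₀ L) := by
    refine hfin.isCompact_sUnion (fun S hS => ?_)
    obtain ⟨p, q, _, rfl⟩ := hseg S hS
    rw [segment_eq_image]
    exact isCompact_Icc.image (by fun_prop)
  have hKne : (⋃₀ L).Nonempty := by
    obtain ⟨S, hS⟩ := hne
    obtain ⟨p, q, _, rfl⟩ := hseg S hS
    exact ⟨p, _, hS, left_mem_segment ℝ p q⟩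
  have hfc : Continuous f := by fun_prop
  obtain ⟨x, hxK, hxmax⟩ := hKcomp.exists_isMaxOn hKne hfc.continuousOn
  obtain ⟨y, hyK, hymin⟩ := hKcomp.exists_isMinOn hKne hfc.continuousOn
  have hxopt : ∀ z ∈ ⋃₀ L, f z ≤ f x := fun z hz => isMaxOn_iff.mp hxmax z hz
  have hyopt : ∀ z ∈ ⋃₀ L, f y ≤ f z := fun z hz => isMinOn_iff.mp hymin z hz
  have hfree_x : IsFreeEndpt x L := free_of_opt L hseg f hlin hinjL x hxK hxopt
  have hfree_y : IsFreeEndpt y L := by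
    refine free_of_opt L hseg (fun t => -(f t)) ?_ ?_ y hyK ?_
    · intro a b u v hab
      show -(f (a • u + b • v)) = a * -(f u) + b * -(f v)
      rw [hlin a b u v hab]; ring
    · intro S hS p q hpq hSeq h
      exact hinjL S hS p q hpq hSeq (neg_injective h)
    · intro z hz
      simpa using hyopt z hz
  refine ⟨x, y, ?_, hfree_x, hfree_y⟩
  intro hxy
  obtain ⟨S, hS⟩ := hne
  obtain ⟨p, q, hpq, hSeq⟩ := hseg S hS
  have hpmem : p ∈ ⋃₀ L := ⟨S, hS, hSeq ▸ left_mem_segment ℝ p q⟩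
  have hqmem : q ∈ ⋃₀ L := ⟨S, hS, hSeq ▸ right_mem_segment ℝ p q⟩
  have h1 : f p ≤ f x := hxopt p hpmem
  have h2 : f q ≤ f x := hxopt q hqmem
  have h3 : f y ≤ f p := hyopt p hpmem
  have h4 : f y ≤ f q := hyopt q hqmem
  have hfxy : f x = f y := by rw [hxy]
  exact hinjL S hS p q hpq hSeq (by linarith)
end

section
/- Let L be a finite generic contact system of line segments in ℝ² containing at least one contact, i.e. some endpoint of a segment of L lies in the interior of another segment of L. Then L has three distinct free endpoints p₁, p₂, p₃ that are not collinear (they do not all lie on one line). -/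
/-!
The endpoints of the segments span a polytope `K = conv (⋃ L)`. An extreme point of `K` that lies
on a segment cannot be interior to any segment, since that segment would be a chord of `K` through
it; so it is a free endpoint. If all extreme points were collinear, then by Krein–Milman so would be
`K` and hence all segments; but at a contact `x ∈ (c, d)` with `x` an endpoint of `l`, collinearity
pushes the interior of `l` near `x` into `(c, d)`, contradicting the contact system axiom.
-/

open Set AffineMap Filter Topology

section Collinear

variable {k V P : Type*} [DivisionRing k] [AddCommGroup V] [Module k V] [AddTorsor V P]

theorem Collinear.affineSpan {s : Set P} (h : Collinear k s) :
    Collinear k (affineSpan k s : Set P) := by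
  unfold Collinear at *
  rwa [← AffineSubspace.direction_eq_vectorSpan, direction_affineSpan]

theorem exists_not_collinear_triple {s : Set P} (h : ¬ Collinear k s) :
    ∃ p₁ ∈ s, ∃ p₂ ∈ s, ∃ p₃ ∈ s, ¬ Collinear k ({p₁, p₂, p₃} : Set P) := by
  obtain ⟨p, hp, q, hq, hpq⟩ : s.Nontrivial := by
    by_contra hs
    rcases (not_nontrivial_iff.1 hs).eq_empty_or_singleton with rfl | ⟨p, rfl⟩
    exacts [h (collinear_empty k P), h (collinear_singleton k p)]
  by_contra! hc
  refine h ((collinear_pair k p q).affineSpan.subset fun x hx => ?_)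
  exact (hc p hp q hq x hx).mem_affineSpan_of_mem_of_ne (by simp) (by simp) (by simp) hpq

end Collinear

theorem Collinear.closure_convexHull {E : Type*} [NormedAddCommGroup E] [NormedSpace ℝ E]
    {s : Set E} (h : Collinear ℝ s) : Collinear ℝ (closure (convexHull ℝ s)) := by
  have := h.finiteDimensional_direction_affineSpan
  exact h.affineSpan.subset <| closure_minimal (convexHull_subset_affineSpan s)
    (_root_.affineSpan ℝ s).closed_of_finiteDimensional

theorem IsCompact.collinear_of_collinear_extremePoints {E : Type*} [NormedAddCommGroup E]
    [NormedSpace ℝ E] {K : Set E} (hK : IsCompact K) (hconv : Convex ℝ K)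
    (h : Collinear ℝ (K.extremePoints ℝ)) : Collinear ℝ K :=
  closure_convexHull_extremePoints hK hconv ▸ h.closure_convexHull

/-- `(c, d)` is relatively open in its line, so the start of the segment from `x` stays in it. -/
theorem openSegment_inter_openSegment_nonempty {E : Type*} [AddCommGroup E] [Module ℝ E]
    {x b c d : E} (hx : x ∈ openSegment ℝ c d) (hb : b ∈ line[ℝ, c, d]) :
    (openSegment ℝ x b ∩ openSegment ℝ c d).Nonempty := by
  rw [openSegment_eq_image_lineMap] at hx
  obtain ⟨w, hw, rfl⟩ := hx
  obtain ⟨s, rfl⟩ := mem_affineSpan_pair_iff_exists_lineMap_eq.1 hb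
  have hnear : ∀ᶠ t in 𝓝[>] (0 : ℝ), t ∈ Ioo 0 1 ∧ lineMap w s t ∈ Ioo (0 : ℝ) 1 := by
    refine Eventually.and (Ioo_mem_nhdsGT one_pos) (nhdsWithin_le_nhds ?_)
    exact (lineMap_continuous.tendsto' 0 w (by simp)).eventually (Ioo_mem_nhds hw.1 hw.2)
  obtain ⟨t, ht, hts⟩ := hnear.exists
  refine ⟨_, lineMap_mem_openSegment ℝ _ _ ht, ?_⟩
  rw [← apply_lineMap]
  exact lineMap_mem_openSegment ℝ c d hts

theorem IsEndpt.exists_eq_segment {x : Pt} {l : Set Pt} (h : IsEndpt x l) :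
    ∃ b, x ≠ b ∧ l = segment ℝ x b := by
  obtain ⟨p, q, hpq, rfl, rfl | rfl⟩ := h
  · exact ⟨q, hpq, rfl⟩
  · exact ⟨p, hpq.symm, segment_symm ℝ _ _⟩

theorem not_collinear_sUnion_of_contact {L : Set (Set Pt)} (hL : IsContactSystem L)
    (hcontact : ∃ l ∈ L, ∃ m ∈ L, l ≠ m ∧ ∃ x : Pt, IsEndpt x l ∧ IsIntPt x m) :
    ¬ Collinear ℝ (⋃₀ L) := by
  intro hcol
  obtain ⟨l, hl, m, hm, hlm, x, hxl, c, d, hcd, rfl, hx⟩ := hcontact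
  obtain ⟨b, hxb, rfl⟩ := hxl.exists_eq_segment
  have hb : b ∈ line[ℝ, c, d] :=
    hcol.mem_affineSpan_of_mem_of_ne ⟨_, hm, left_mem_segment ℝ c d⟩
      ⟨_, hm, right_mem_segment ℝ c d⟩ ⟨_, hl, right_mem_segment ℝ x b⟩ hcd
  obtain ⟨y, hyl, hym⟩ := openSegment_inter_openSegment_nonempty hx hb
  exact hlm (hL.2 y _ hl _ hm ⟨x, b, hxb, rfl, hyl⟩ ⟨c, d, hcd, rfl, hym⟩)

theorem exists_finite_subset_sUnion_subset_convexHull {L : Set (Set Pt)} (hfin : L.Finite)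
    (hL : ∀ S ∈ L, IsSeg S) :
    ∃ F : Set Pt, F.Finite ∧ F ⊆ ⋃₀ L ∧ ⋃₀ L ⊆ convexHull ℝ F := by
  choose! p q hpq using hL
  refine ⟨⋃ l ∈ L, {p l, q l}, hfin.biUnion fun _ _ => toFinite _, ?_, ?_⟩
  · simp only [iUnion_subset_iff, insert_subset_iff, singleton_subset_iff]
    exact fun l hl => ⟨⟨l, hl, (hpq l hl).2.symm.subset (left_mem_segment ℝ _ _)⟩,
      ⟨l, hl, (hpq l hl).2.symm.subset (right_mem_segment ℝ _ _)⟩⟩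
  · refine sUnion_subset fun l hl => ?_
    rw [(hpq l hl).2, ← convexHull_pair]
    exact convexHull_mono (subset_biUnion_of_mem (u := fun l => {p l, q l}) hl)

theorem isFreeEndpt_of_mem_extremePoints {L : Set (Set Pt)} (hL : ∀ S ∈ L, IsSeg S)
    {K : Set Pt} (hLK : ⋃₀ L ⊆ K) {x : Pt} (hxK : x ∈ K.extremePoints ℝ) (hxL : x ∈ ⋃₀ L) :
    IsFreeEndpt x L := by
  have hnotInt : ∀ m ∈ L, ¬ IsIntPt x m := by
    rintro m hm ⟨c, d, hcd, rfl, hx⟩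
    obtain ⟨rfl, rfl⟩ := (mem_extremePoints.1 hxK).2 c (hLK ⟨_, hm, left_mem_segment ℝ c d⟩)
      d (hLK ⟨_, hm, right_mem_segment ℝ c d⟩) hx
    exact hcd rfl
  obtain ⟨l, hl, hxl⟩ := hxL
  obtain ⟨p, q, hpq, rfl⟩ := hL l hl
  refine ⟨⟨_, hl, p, q, hpq, rfl, ?_⟩, hnotInt⟩
  by_contra! hne
  exact hnotInt _ hl ⟨p, q, hpq, rfl, mem_openSegment_of_ne_left_right hne.1.symm hne.2.symm hxl⟩

/-- A finite generic contact system with at least one contact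
(an endpoint of a segment lying in the interior of another segment) has three
distinct non-collinear free endpoints. -/
theorem stmt_3 (L : Set (Set Pt)) (hfin : L.Finite) (hL : IsGenericCS L)
    (hcontact : ∃ l ∈ L, ∃ m ∈ L, l ≠ m ∧ ∃ x : Pt, IsEndpt x l ∧ IsIntPt x m) :
    ∃ p₁ p₂ p₃ : Pt, p₁ ≠ p₂ ∧ p₁ ≠ p₃ ∧ p₂ ≠ p₃ ∧
      IsFreeEndpt p₁ L ∧ IsFreeEndpt p₂ L ∧ IsFreeEndpt p₃ L ∧
      ¬ Collinear ℝ ({p₁, p₂, p₃} : Set Pt) := by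
  obtain ⟨F, hF, hFL, hLF⟩ := exists_finite_subset_sUnion_subset_convexHull hfin hL.1.1
  set K := convexHull ℝ F
  have hext : ¬ Collinear ℝ (K.extremePoints ℝ) := fun h =>
    not_collinear_sUnion_of_contact hL.1 hcontact <|
      ((hF.isCompact_convexHull ℝ).collinear_of_collinear_extremePoints
        (convex_convexHull ℝ F) h).subset hLF
  have hfree : ∀ x ∈ K.extremePoints ℝ, IsFreeEndpt x L := fun x hx =>
    isFreeEndpt_of_mem_extremePoints hL.1.1 hLF hx (hFL (extremePoints_convexHull_subset hx))
  obtain ⟨p₁, h₁, p₂, h₂, p₃, h₃, hnc⟩ := exists_not_collinear_triple hext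
  exact ⟨p₁, p₂, p₃, ne₁₂_of_not_collinear hnc, ne₁₃_of_not_collinear hnc,
    ne₂₃_of_not_collinear hnc, hfree _ h₁, hfree _ h₂, hfree _ h₃, hnc⟩
end

section
/- Let Γ be a subgroup of the group of isometries of ℝ² that contains a rotation of order at least 3 (i.e. a rotation h with h∘h ≠ id), and let L be a 2-contact system of line segments satisfying (S1) (g·l ∈ L for every l ∈ L, g ∈ Γ). Then for every l ∈ L and every non-identity translation g ∈ Γ one has g(l) ∩ l = ∅. -/
/-!
Write `l = [P, P + d]` and let `g` translate by `v`. If `g l` meets `l`, then, after possibly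
swapping the endpoints, `v = c • d` with `0 < c ≤ 1`. So the translates
`gⁿ l = [P + n c d, P + (n c + 1) d]` lie in `L` and cover the line `P + ℝ d`: each point of it is
interior to one of them or lies on two of them. Applying the rotation `h` gives a second such
chain, along `h P + ℝ (R d)` with `R` the linear part of `h`. As `h` has order at least 3,
`R ≠ ±1`, so `R d` is not parallel to `d` and the two lines meet at a point `z`. At `z` either two
segments share an interior point or three distinct segments meet.
-/
section LinearAlgebra

variable {V : Type*} [NormedAddCommGroup V] [InnerProductSpace ℝ V]

theorem LinearIsometryEquiv.linearIndependent_apply_of_det_pos [Fact (Module.finrank ℝ V = 2)]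
    {f : V ≃ₗᵢ[ℝ] V} (hf : 0 < LinearMap.det (f.toLinearEquiv : V →ₗ[ℝ] V))
    (h_refl : f ≠ LinearIsometryEquiv.refl ℝ V) (h_neg : f ≠ LinearIsometryEquiv.neg ℝ)
    {x : V} (hx : x ≠ 0) : LinearIndependent ℝ ![x, f x] := by
  have := FiniteDimensional.of_fact_finrank_eq_two (K := ℝ) (V := V)
  let o : Orientation ℝ V (Fin 2) := (Module.finBasisOfFinrankEq ℝ V Fact.out).orientation
  obtain ⟨θ, rfl⟩ := o.exists_linearIsometryEquiv_eq_of_det_pos hf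
  rw [← o.oangle_ne_zero_and_ne_pi_iff_linearIndependent, o.oangle_rotation_self_right hx]
  constructor
  · rintro rfl
    exact h_refl o.rotation_zero
  · rintro rfl
    exact h_neg o.rotation_pi

theorem exists_add_smul_eq_add_smul [Fact (Module.finrank ℝ V = 2)] {d e : V}
    (hde : LinearIndependent ℝ ![d, e]) (P Q : V) :
    ∃ t t' : ℝ, P + t • d = Q + t' • e := by
  have := FiniteDimensional.of_fact_finrank_eq_two (K := ℝ) (V := V)
  have hspan :=
    hde.span_eq_top_of_card_eq_finrank' (by simp [(Fact.out : Module.finrank ℝ V = 2)])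
  have hmem : Q - P ∈ Submodule.span ℝ {d, e} := by
    rw [← Matrix.range_cons_cons_empty d e ![], hspan]
    exact Submodule.mem_top
  obtain ⟨a, b, hab⟩ := Submodule.mem_span_pair.mp hmem
  exact ⟨a, -b, by rw [neg_smul, ← sub_eq_add_neg, eq_sub_iff_add_eq, add_assoc, hab]; abel⟩

end LinearAlgebra

section LineSeg

variable {E : Type*} [AddCommGroup E] [Module ℝ E]

def lineSeg (P d : E) (s : ℝ) : Set E := segment ℝ (P + s • d) (P + (s + 1) • d)

theorem add_smul_mem_lineSeg {P d : E} {s t : ℝ} (hs : s ≤ t) (ht : t ≤ s + 1) :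
    P + t • d ∈ lineSeg P d s := by
  rw [lineSeg, segment_eq_image']
  exact ⟨t - s, ⟨by linarith, by linarith⟩, by module⟩

theorem add_smul_mem_openSegment {P d : E} {s t : ℝ} (hs : s < t) (ht : t < s + 1) :
    P + t • d ∈ openSegment ℝ (P + s • d) (P + (s + 1) • d) := by
  rw [openSegment_eq_image']
  exact ⟨t - s, ⟨by linarith, by linarith⟩, by module⟩

theorem exists_eq_add_smul_of_mem_lineSeg {P d x : E} {s : ℝ} (hx : x ∈ lineSeg P d s) :
    ∃ t, s ≤ t ∧ t ≤ s + 1 ∧ x = P + t • d := by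
  rw [lineSeg, segment_eq_image'] at hx
  obtain ⟨θ, ⟨hθ₀, hθ₁⟩, rfl⟩ := hx
  exact ⟨s + θ, by linarith, by linarith, by module⟩

theorem lineSeg_injective {P d : E} (hd : d ≠ 0) : Function.Injective (lineSeg P d) := by
  suffices key : ∀ s s', lineSeg P d s = lineSeg P d s' → s' ≤ s from
    fun s s' h ↦ le_antisymm (key s' s h.symm) (key s s' h)
  intro s s' h
  obtain ⟨t, hst, -, ht⟩ := exists_eq_add_smul_of_mem_lineSeg
    (h ▸ add_smul_mem_lineSeg (P := P) (d := d) le_rfl (by linarith) : P + s • d ∈ lineSeg P d s')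
  rw [add_left_cancel_iff, (smul_left_injective ℝ hd).eq_iff] at ht
  exact ht ▸ hst

theorem lineSeg_ne_lineSeg {P Q d e : E} (hde : LinearIndependent ℝ ![d, e]) (s s' : ℝ) :
    lineSeg P d s ≠ lineSeg Q e s' := by
  intro h
  obtain ⟨t₁, -, -, ht₁⟩ := exists_eq_add_smul_of_mem_lineSeg (h ▸ left_mem_segment ℝ _ _ :
    Q + s' • e ∈ lineSeg P d s)
  obtain ⟨t₂, -, -, ht₂⟩ := exists_eq_add_smul_of_mem_lineSeg (h ▸ right_mem_segment ℝ _ _ :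
    Q + (s' + 1) • e ∈ lineSeg P d s)
  have he : e = (t₂ - t₁) • d := by
    calc e = Q + (s' + 1) • e - (Q + s' • e) := by module
      _ = (t₂ - t₁) • d := by rw [ht₁, ht₂]; module
  have := LinearIndependent.pair_iff.mp hde (t₂ - t₁) (-1) (by rw [← he]; module)
  norm_num at this

theorem image_smul_add_lineSeg (P d : E) (r s : ℝ) :
    (r • d + ·) '' lineSeg P d s = lineSeg P d (r + s) := by
  rw [lineSeg, segment_translate_image, lineSeg]
  congr 1 <;> module

theorem AffineMap.image_lineSeg {F : Type*} [AddCommGroup F] [Module ℝ F] (f : E →ᵃ[ℝ] F)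
    (P d : E) (s : ℝ) : f '' lineSeg P d s = lineSeg (f P) (f.linear d) s := by
  have hf : ∀ t : ℝ, f (P + t • d) = f P + t • f.linear d := fun t ↦ by
    rw [add_comm P, ← vadd_eq_add, f.map_vadd, f.linear.map_smul, vadd_eq_add, add_comm]
  rw [lineSeg, image_segment, hf, hf, lineSeg]

theorem exists_lineSeg_eq_of_translate_inter_nonempty {p q v : E} (hpq : p ≠ q) (hv : v ≠ 0)
    (h : ((v + ·) '' segment ℝ p q ∩ segment ℝ p q).Nonempty) :
    ∃ P d : E, ∃ c : ℝ, d ≠ 0 ∧ 0 < c ∧ c ≤ 1 ∧ segment ℝ p q = lineSeg P d 0 ∧ v = c • d := by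
  obtain ⟨_, ⟨y, hy, rfl⟩, hx⟩ := h
  rw [segment_eq_image'] at hy hx
  obtain ⟨t, ⟨ht₀, ht₁⟩, rfl⟩ := hy
  obtain ⟨s, ⟨hs₀, hs₁⟩, hs⟩ := hx
  have hv' : v = (s - t) • (q - p) := by
    simp only at hs
    calc v = p + s • (q - p) - (p + t • (q - p)) := by rw [hs]; abel
      _ = (s - t) • (q - p) := by module
  rcases lt_trichotomy (s - t) 0 with hneg | hzero | hpos
  · refine ⟨q, p - q, t - s, sub_ne_zero.mpr hpq, by linarith, by linarith, ?_, ?_⟩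
    · simp [lineSeg, segment_symm]
    · rw [hv']; module
  · exact absurd (by rw [hv', hzero, zero_smul]) hv
  · refine ⟨p, q - p, s - t, sub_ne_zero.mpr hpq.symm, hpos, by linarith, ?_, hv'⟩
    simp [lineSeg]

def lineChain (P d : E) (c : ℝ) : Set (Set E) :=
  Set.range fun n : ℤ ↦ lineSeg P d (n * c)

end LineSeg

theorem exists_int_mul_eq_or_mem_Ioo {c : ℝ} (hc₀ : 0 < c) (hc₁ : c ≤ 1) (t : ℝ) :
    ∃ n : ℤ, t = n * c ∨ (n * c < t ∧ t < n * c + 1) := by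
  refine ⟨⌊t / c⌋, ?_⟩
  have hle : (⌊t / c⌋ : ℝ) * c ≤ t := (le_div_iff₀ hc₀).mp (Int.floor_le _)
  have hlt : t < (⌊t / c⌋ + 1 : ℝ) * c := (div_lt_iff₀ hc₀).mp (Int.lt_floor_add_one _)
  rcases hle.eq_or_lt with heq | hlt'
  · exact Or.inl heq.symm
  · exact Or.inr ⟨hlt', by linarith⟩

theorem isIntPt_lineSeg {P d : Pt} (hd : d ≠ 0) {s t : ℝ} (hs : s < t) (ht : t < s + 1) :
    IsIntPt (P + t • d) (lineSeg P d s) := by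
  refine ⟨_, _, fun h ↦ hd ?_, rfl, add_smul_mem_openSegment hs ht⟩
  simpa [add_smul] using h

theorem exists_mem_lineChain_isIntPt_or_mem_two {P d : Pt} (hd : d ≠ 0) {c : ℝ} (hc₀ : 0 < c)
    (hc₁ : c ≤ 1) (t : ℝ) :
    ∃ S ∈ lineChain P d c, P + t • d ∈ S ∧
      (IsIntPt (P + t • d) S ∨ ∃ S' ∈ lineChain P d c, S' ≠ S ∧ P + t • d ∈ S') := by
  obtain ⟨n, rfl | ⟨hlt, hlt'⟩⟩ := exists_int_mul_eq_or_mem_Ioo hc₀ hc₁ t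
  · refine ⟨_, ⟨n, rfl⟩, add_smul_mem_lineSeg le_rfl (by linarith), Or.inr ⟨_, ⟨n - 1, rfl⟩,
      fun h ↦ ?_, add_smul_mem_lineSeg (by push_cast; linarith) (by push_cast; linarith)⟩⟩
    have := lineSeg_injective hd h
    push_cast at this
    linarith
  · exact ⟨_, ⟨n, rfl⟩, add_smul_mem_lineSeg hlt.le hlt'.le, Or.inl (isIntPt_lineSeg hd hlt hlt')⟩

theorem Is2ContactSystem.not_lineChain_subset {L : Set (Set Pt)} (hL : Is2ContactSystem L)
    {P Q d e : Pt} (hde : LinearIndependent ℝ ![d, e]) {c c' : ℝ} (hc₀ : 0 < c) (hc₁ : c ≤ 1)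
    (hc₀' : 0 < c') (hc₁' : c' ≤ 1) (hP : lineChain P d c ⊆ L) : ¬ lineChain Q e c' ⊆ L := by
  intro hQ
  have : Fact (Module.finrank ℝ Pt = 2) := ⟨finrank_euclideanSpace_fin⟩
  obtain ⟨t, t', hz⟩ := exists_add_smul_eq_add_smul hde P Q
  obtain ⟨S, hS, hzS, hS'⟩ :=
    exists_mem_lineChain_isIntPt_or_mem_two (P := P) (d := d) (hde.ne_zero 0) hc₀ hc₁ t
  obtain ⟨T, hT, hzT, hT'⟩ :=
    exists_mem_lineChain_isIntPt_or_mem_two (P := Q) (d := e) (hde.ne_zero 1) hc₀' hc₁' t'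
  rw [← hz] at hzT hT'
  have hne : ∀ S ∈ lineChain P d c, ∀ T ∈ lineChain Q e c', S ≠ T := by
    rintro _ ⟨n, rfl⟩ _ ⟨m, rfl⟩
    exact lineSeg_ne_lineSeg hde _ _
  rcases hS' with hS' | ⟨S', hS', hSS', hzS'⟩
  · rcases hT' with hT' | ⟨T', hT', hTT', hzT'⟩
    · exact hne S hS T hT (hL.1.2 _ S (hP hS) T (hQ hT) hS' hT')
    · rcases hL.2 _ T (hQ hT) T' (hQ hT') S (hP hS) hzT hzT' hzS with h | h | h
      exacts [hTT' h.symm, hne S hS T hT h.symm, hne S hS T' hT' h.symm]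
  · rcases hL.2 _ S (hP hS) S' (hP hS') T (hQ hT) hzS hzS' hzT with h | h | h
    exacts [hSS' h.symm, hne S hS T hT h, hne S' hS' T hT h]

theorem AffineIsometryEquiv.zpow_apply_of_forall_apply_eq_vadd {V P : Type*}
    [NormedAddCommGroup V] [NormedSpace ℝ V] [PseudoMetricSpace P] [NormedAddTorsor V P]
    {g : P ≃ᵃⁱ[ℝ] P} {v : V} (hg : ∀ x, g x = v +ᵥ x) (n : ℤ) (x : P) :
    (g ^ n) x = n • v +ᵥ x := by
  induction n using Int.induction_on generalizing x with
  | zero => simp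
  | succ k ih =>
    rw [zpow_add_one, coe_mul, Function.comp_apply, hg, ih, vadd_vadd, add_zsmul, one_zsmul]
  | pred k ih =>
    have hginv : g⁻¹ x = -v +ᵥ x := by
      rw [coe_inv, symm_apply_eq, hg, vadd_neg_vadd]
    rw [zpow_sub_one, coe_mul, Function.comp_apply, hginv, ih, vadd_vadd, sub_zsmul, one_zsmul]

theorem AffineIsometryEquiv.apply_eq_linearIsometryEquiv_vsub_vadd {V P : Type*}
    [NormedAddCommGroup V] [NormedSpace ℝ V] [PseudoMetricSpace P] [NormedAddTorsor V P]
    {h : P ≃ᵃⁱ[ℝ] P} {x₀ : P} (hx₀ : h x₀ = x₀) (z : P) :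
    h z = h.linearIsometryEquiv (z -ᵥ x₀) +ᵥ x₀ := by
  conv_lhs => rw [← vsub_vadd z x₀]
  rw [h.map_vadd, hx₀]

theorem IsRotation.linearIndependent_apply {h : Iso2} (hh : IsRotation h) (hh2 : h * h ≠ 1)
    {d : Pt} (hd : d ≠ 0) : LinearIndependent ℝ ![d, h.linearIsometryEquiv d] := by
  obtain ⟨h1, hdet, x₀, hx₀⟩ := hh
  have hfix := h.apply_eq_linearIsometryEquiv_vsub_vadd hx₀
  have : Fact (Module.finrank ℝ Pt = 2) := ⟨finrank_euclideanSpace_fin⟩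
  have hpos : 0 < detOf h := hdet ▸ one_pos
  refine h.linearIsometryEquiv.linearIndependent_apply_of_det_pos hpos ?_ ?_ hd
  · intro hR
    refine h1 (AffineIsometryEquiv.ext fun z ↦ ?_)
    rw [hfix, hR]
    simp
  · intro hR
    refine hh2 (AffineIsometryEquiv.ext fun z ↦ ?_)
    rw [AffineIsometryEquiv.coe_mul, Function.comp_apply, hfix, hfix z, hR]
    simp

theorem SatS1.lineChain_subset {Γ : Subgroup Iso2} {L : Set (Set Pt)} (hS1 : SatS1 Γ L)
    {g : Iso2} (hg : g ∈ Γ) {P d : Pt} {c : ℝ} (hgd : ∀ x, g x = c • d +ᵥ x)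
    (hl : lineSeg P d 0 ∈ L) : lineChain P d c ⊆ L := by
  rintro _ ⟨n, rfl⟩
  have hgn : ⇑(g ^ n) = ((n * c) • d + ·) := funext fun x ↦ by
    rw [g.zpow_apply_of_forall_apply_eq_vadd hgd, ← Int.cast_smul_eq_zsmul ℝ, smul_smul,
      vadd_eq_add]
  have := hS1 _ hl _ (zpow_mem hg n)
  rwa [hgn, image_smul_add_lineSeg, add_zero] at this

theorem SatS1.lineChain_image_subset {Γ : Subgroup Iso2} {L : Set (Set Pt)} (hS1 : SatS1 Γ L)
    {h : Iso2} (hh : h ∈ Γ) {P d : Pt} {c : ℝ} (hP : lineChain P d c ⊆ L) :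
    lineChain (h P) (h.linearIsometryEquiv d) c ⊆ L := by
  rintro _ ⟨n, rfl⟩
  have := hS1 _ (hP ⟨n, rfl⟩) h hh
  rwa [show ⇑h = ⇑h.toAffineEquiv.toAffineMap from rfl, AffineMap.image_lineSeg] at this

/-- If a subgroup `Γ` of the isometry group of the plane
contains a rotation of order at least 3, then in any `Γ`-invariant 2-contact
system no segment meets its image under a (non-identity) translation in `Γ`. -/
theorem stmt_6 (Γ : Subgroup Iso2)
    (hrot : ∃ h ∈ Γ, IsRotation h ∧ h * h ≠ 1)
    (L : Set (Set Pt)) (hL : Is2ContactSystem L) (hS1 : SatS1 Γ L) :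
    ∀ l ∈ L, ∀ g ∈ Γ, IsTranslation g → (⇑g) '' l ∩ l = ∅ := by
  obtain ⟨h, hhΓ, hh, hh2⟩ := hrot
  rintro l hl g hg ⟨v, hv, hgv⟩
  rw [← Set.not_nonempty_iff_eq_empty]
  intro hmeet
  obtain ⟨p, q, hpq, rfl⟩ := hL.1.1 l hl
  have hg' : ∀ x, g x = v +ᵥ x := fun x ↦ (hgv x).trans (add_comm _ _)
  obtain ⟨P, d, c, hd, hc₀, hc₁, hl', rfl⟩ :=
    exists_lineSeg_eq_of_translate_inter_nonempty hpq hv ((funext hg' : ⇑g = (v + ·)) ▸ hmeet)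
  have hS : lineChain P d c ⊆ L := hS1.lineChain_subset hg hg' (hl' ▸ hl)
  exact hL.not_lineChain_subset (hh.linearIndependent_apply hh2 hd) hc₀ hc₁ hc₀ hc₁ hS
    (hS1.lineChain_image_subset hhΓ hS)
end

section
/- Let Γ be the finite cyclic group generated by a rotation of ℝ² of finite order n ≥ 2, and let L be a generic Γ-symmetric contact system of line segments in ℝ². Then every nonempty Γ-invariant subset M ⊆ L has at least one free endpoint, i.e. a point that is an endpoint of some segment of M and does not lie in the interior of any segment of M. -/
private lemma aux_extreme {p q x y : Pt} (hp : p ∈ openSegment ℝ x y)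
    (hx : x ∈ segment ℝ p q) (hy : y ∈ segment ℝ p q) : x = y := by
  rcases eq_or_ne p q with h | h
  · subst h
    rw [segment_same] at hx hy
    simp only [Set.mem_singleton_iff] at hx hy
    rw [hx, hy]
  obtain ⟨c, d, hc, hd, hcd, hP⟩ := hp
  obtain ⟨e, f, he, hf, hef, hx'⟩ := hx
  obtain ⟨g, k, hg, hk, hgk, hy'⟩ := hy
  have h1 : (c*e+d*g) • p + (c*f+d*k) • q = p := by
    have : (c*e+d*g) • p + (c*f+d*k) • q = c • x + d • y := by
      rw [← hx', ← hy']; module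
    rw [this, hP]
  have hsum : (c*e+d*g) + (c*f+d*k) = 1 := by
    have : (c*e+d*g) + (c*f+d*k) = c*(e+f) + d*(g+k) := by ring
    rw [this, hef, hgk]; linarith
  have h2 : (c*f+d*k) • (q - p) = 0 := by
    have h3 : ((c*e+d*g) + (c*f+d*k)) • p = p := by rw [hsum, one_smul]
    calc (c*f+d*k) • (q - p)
        = ((c*e+d*g) • p + (c*f+d*k) • q) - ((c*e+d*g)+(c*f+d*k)) • p := by module
      _ = p - p := by rw [h1, h3]
      _ = 0 := sub_self p
  have h4 : c*f+d*k = 0 := by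
    rcases smul_eq_zero.1 h2 with h' | h'
    · exact h'
    · exact absurd (sub_eq_zero.1 h').symm h
  have hf0 : f = 0 := by nlinarith
  have hk0 : k = 0 := by nlinarith
  have he1 : e = 1 := by linarith
  have hg1 : g = 1 := by linarith
  rw [← hx', ← hy', hf0, hk0, he1, hg1]

private lemma aux_endpts {p q p' q' : Pt} (h : segment ℝ p q = segment ℝ p' q')
    (hne : p' ≠ q') : p = p' ∨ p = q' := by
  have hp : p ∈ segment ℝ p' q' := by rw [← h]; exact left_mem_segment ℝ p q
  obtain ⟨a, b, ha, hb, hab, hP⟩ := hp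
  rcases eq_or_lt_of_le ha with ha0 | ha0
  · right
    have hb1 : b = 1 := by linarith
    rw [← hP, ← ha0, hb1, zero_smul, zero_add, one_smul]
  rcases eq_or_lt_of_le hb with hb0 | hb0
  · left
    have ha1 : a = 1 := by linarith
    rw [← hP, ← hb0, ha1, zero_smul, add_zero, one_smul]
  exfalso
  have hpo : p ∈ openSegment ℝ p' q' := ⟨a, b, ha0, hb0, hab, hP⟩
  refine hne (aux_extreme (q := q) hpo ?_ ?_)
  · rw [h]; exact left_mem_segment ℝ p' q'
  · rw [h]; exact right_mem_segment ℝ p' q'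

/-- For `Γ` the finite cyclic group generated by a rotation of
finite order `n ≥ 2`, every nonempty `Γ`-invariant subset of a generic
`Γ`-symmetric contact system has at least one free endpoint. -/
theorem stmt_8 (n : ℕ) (hn : 2 ≤ n) (r : Iso2) (hr : IsRotation r)
    (hord : orderOf r = n)
    (L : Set (Set Pt)) (hL : IsGenSymmCS (Subgroup.zpowers r) L) :
    ∀ M ⊆ L, M.Nonempty →
      (∀ l ∈ M, ∀ g ∈ Subgroup.zpowers r, (⇑g) '' l ∈ M) →
      ∃ x : Pt, IsFreeEndpt x M := by
  classical
  obtain ⟨⟨⟨hLseg, hInt⟩, hEnd⟩, hS1, ⟨T, hTfin, hTL, hTgen⟩, hS4⟩ := hL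
  have hro : IsOfFinOrder r := by
    rw [← orderOf_pos_iff, hord]; omega
  have hfin : ((Subgroup.zpowers r : Subgroup Iso2) : Set Iso2).Finite :=
    hro.finite_zpowers
  have hLfin : L.Finite := by
    apply Set.Finite.subset (Set.Finite.image2 (fun (g : Iso2) (t : Set Pt) => (⇑g) '' t) hfin hTfin)
    intro l hl
    obtain ⟨t, ht, g, hg, hgt⟩ := hTgen l hl
    exact ⟨g, hg, t, ht, hgt⟩
  intro M hML hMne hMinv
  have hMfin : M.Finite := hLfin.subset hML
  have hsegM : ∀ m : {m // m ∈ M}, ∃ p q : Pt, p ≠ q ∧ (m : Set Pt) = segment ℝ p q :=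
    fun m => hLseg m (hML m.2)
  choose P Q hne heq using hsegM
  set E : Set Pt := {y | ∃ m ∈ M, IsEndpt y m} with hE
  have hEfin : E.Finite := by
    have hft : Finite {m // m ∈ M} := hMfin.to_subtype
    apply Set.Finite.subset ((Set.finite_range P).union (Set.finite_range Q))
    rintro y ⟨m, hm, p', q', hne', heq', hy⟩
    have h1 : m = segment ℝ (P ⟨m,hm⟩) (Q ⟨m,hm⟩) := heq ⟨m, hm⟩
    have hseq : segment ℝ p' q' = segment ℝ (P ⟨m,hm⟩) (Q ⟨m,hm⟩) := by
      exact heq'.symm.trans h1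
    rcases hy with rfl | rfl
    · rcases aux_endpts hseq (hne ⟨m,hm⟩) with h | h
      · exact Or.inl ⟨⟨m,hm⟩, h.symm⟩
      · exact Or.inr ⟨⟨m,hm⟩, h.symm⟩
    · rcases aux_endpts ((segment_symm ℝ y p').trans hseq) (hne ⟨m,hm⟩) with h | h
      · exact Or.inl ⟨⟨m,hm⟩, h.symm⟩
      · exact Or.inr ⟨⟨m,hm⟩, h.symm⟩
  obtain ⟨m0, hm0⟩ := hMne
  have heq0 : m0 = segment ℝ (P ⟨m0,hm0⟩) (Q ⟨m0,hm0⟩) := heq ⟨m0, hm0⟩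
  have hEne : (P ⟨m0, hm0⟩) ∈ E :=
    ⟨m0, hm0, P ⟨m0,hm0⟩, Q ⟨m0,hm0⟩, hne _, heq0, Or.inl rfl⟩
  obtain ⟨x, hxE, hxmax⟩ := hEfin.toFinset.exists_max_image (fun y => ‖y‖)
    ⟨_, hEfin.mem_toFinset.2 hEne⟩
  have hxE' : x ∈ E := hEfin.mem_toFinset.1 hxE
  have hxmax' : ∀ y ∈ E, ‖y‖ ≤ ‖x‖ := fun y hy => hxmax y (hEfin.mem_toFinset.2 hy)
  refine ⟨x, hxE', ?_⟩
  rintro m hm ⟨p', q', hne', heq', hxo⟩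
  have hp'E : p' ∈ E := ⟨m, hm, p', q', hne', heq', Or.inl rfl⟩
  have hq'E : q' ∈ E := ⟨m, hm, p', q', hne', heq', Or.inr rfl⟩
  obtain ⟨a, b, ha, hb, hab, hx⟩ := hxo
  have hlt := norm_combo_lt_of_ne (hxmax' p' hp'E) (hxmax' q' hq'E) hne' ha hb hab
  rw [hx] at hlt
  exact lt_irrefl _ hlt
end

section
/- Let Γ be the group of order 2 generated by a rotation r of ℝ² of order 2 (a half-turn), and let L be a generic Γ-symmetric contact system of line segments in ℝ². Then for every nonempty Γ-invariant subset M ⊆ L, the set of free endpoints of M (endpoints of segments of M not lying in the interior of any segment of M) meets at least two distinct Γ-orbits; that is, there exist free endpoints p, q of M with q ≠ p and q ≠ r(p). -/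
open Set

section Segments

variable {E : Type*} [AddCommGroup E] [Module ℝ E]

theorem eq_of_mem_openSegment_of_le {s u z : ℝ} (hz : z ∈ openSegment ℝ s u) (hs : s ≤ z)
    (hu : u ≤ z) : s = z ∧ u = z := by
  obtain rfl : s = u := by
    by_contra hsu
    rw [openSegment_eq_Ioo' hsu] at hz
    exact (max_le hs hu).not_gt hz.2
  rw [openSegment_same] at hz
  exact ⟨hz.symm, hz.symm⟩

theorem LinearMap.apply_mem_segment (f : E →ₗ[ℝ] ℝ) {a b y : E} (hy : y ∈ segment ℝ a b) :
    f y ∈ segment ℝ (f a) (f b) :=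
  image_segment ℝ f.toAffineMap a b ▸ mem_image_of_mem f hy

theorem LinearMap.apply_mem_openSegment (f : E →ₗ[ℝ] ℝ) {a b y : E}
    (hy : y ∈ openSegment ℝ a b) : f y ∈ openSegment ℝ (f a) (f b) :=
  image_openSegment ℝ f.toAffineMap a b ▸ mem_image_of_mem f hy

theorem LinearMap.exists_mem_segment_apply_eq (f : E →ₗ[ℝ] ℝ) {a b : E} {t : ℝ}
    (ht : t ∈ segment ℝ (f a) (f b)) : ∃ y ∈ segment ℝ a b, f y = t :=
  (image_segment ℝ f.toAffineMap a b ▸ ht : t ∈ f '' segment ℝ a b)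

theorem LinearMap.injOn_segment (f : E →ₗ[ℝ] ℝ) {a b : E} (hab : f a ≠ f b) :
    InjOn f (segment ℝ a b) := by
  rw [segment_eq_image_lineMap]
  rintro - ⟨s, -, rfl⟩ - ⟨u, -, rfl⟩ hsu
  have hne : f.toAffineMap a ≠ f.toAffineMap b := hab
  rw [← f.coe_toAffineMap, AffineMap.apply_lineMap, AffineMap.apply_lineMap] at hsu
  rw [AffineMap.lineMap_injective ℝ hne hsu]

/-- Otherwise the segment from `x` to `e` would cross the level `t`, which `K` avoids. -/
theorem apply_le_of_isMaxOn_of_segment_subset (f : E →ₗ[ℝ] ℝ) {K : Set E} {t : ℝ} {x e : E}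
    (hgap : ∀ y ∈ K, f y ≠ t) (hx : IsMaxOn f (K ∩ {y | f y < t}) x) (hxt : f x < t)
    (hxe : segment ℝ x e ⊆ K) : f e ≤ f x := by
  by_contra! hlt
  have he : e ∈ K := hxe (right_mem_segment ℝ x e)
  rcases (hgap e he).lt_or_gt with het | het
  · exact hlt.not_ge (hx ⟨he, het⟩)
  · have ht : t ∈ segment ℝ (f x) (f e) := by
      rw [segment_eq_Icc (hxt.trans het).le]
      exact ⟨hxt.le, het.le⟩
    obtain ⟨y, hy, hyt⟩ := f.exists_mem_segment_apply_eq ht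
    exact hgap y (hxe hy) hyt

end Segments

section Normed

variable {E : Type*} [NormedAddCommGroup E] [NormedSpace ℝ E]

theorem isCompact_segment (a b : E) : IsCompact (segment ℝ a b) :=
  convexHull_pair (𝕜 := ℝ) a b ▸ (toFinite {a, b}).isCompact_convexHull ℝ

theorem mem_segment_of_forall_le_max {p a y : E}
    (h : ∀ f : StrongDual ℝ E, f y ≤ max (f p) (f a)) : y ∈ segment ℝ p a := by
  by_contra hy
  obtain ⟨f, u, hf, hu⟩ := geometric_hahn_banach_closed_point (convex_segment p a)
    (isCompact_segment p a).isClosed hy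
  exact (h f).not_gt (max_lt ((hf p (left_mem_segment ℝ p a)).trans hu)
    ((hf a (right_mem_segment ℝ p a)).trans hu))

end Normed

section FreeEndpoints

variable {M : Set (Set Pt)}

theorem isCompact_sUnion_of_isSeg (hfin : M.Finite) (hseg : ∀ l ∈ M, IsSeg l) :
    IsCompact (⋃₀ M) :=
  hfin.isCompact_sUnion fun l hl => by
    obtain ⟨a, b, -, rfl⟩ := hseg l hl
    exact isCompact_segment a b

theorem isFreeEndpt_of_forall_notMem_openSegment (hseg : ∀ l ∈ M, IsSeg l) {x : Pt}
    (hx : x ∈ ⋃₀ M)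
    (h : ∀ a b, a ≠ b → segment ℝ a b ⊆ ⋃₀ M → x ∉ openSegment ℝ a b) : IsFreeEndpt x M := by
  refine ⟨?_, fun m hm ⟨a, b, hab, hm_eq, hxm⟩ => h a b hab (hm_eq ▸ subset_sUnion_of_mem hm) hxm⟩
  obtain ⟨l, hl, hxl⟩ := hx
  obtain ⟨a, b, hab, rfl⟩ := hseg l hl
  rw [← insert_endpoints_openSegment] at hxl
  rcases hxl with hxa | hxb | hxab
  · exact ⟨_, hl, a, b, hab, rfl, Or.inl hxa⟩
  · exact ⟨_, hl, a, b, hab, rfl, Or.inr hxb⟩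
  · exact absurd hxab (h a b hab (subset_sUnion_of_mem hl))

/-- Take, among the maximisers of `f`, one of largest norm: strict convexity of the norm keeps it
out of every open segment. -/
theorem exists_isFreeEndpt_isMaxOn (hfin : M.Finite) (hne : M.Nonempty)
    (hseg : ∀ l ∈ M, IsSeg l) (f : StrongDual ℝ Pt) :
    ∃ x, IsFreeEndpt x M ∧ IsMaxOn f (⋃₀ M) x := by
  have hK := isCompact_sUnion_of_isSeg hfin hseg
  obtain ⟨l, hl⟩ := hne
  obtain ⟨a₀, b₀, -, rfl⟩ := hseg l hl
  obtain ⟨x₁, hx₁K, hx₁⟩ := hK.exists_isMaxOn ⟨a₀, _, hl, left_mem_segment ℝ a₀ b₀⟩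
    f.continuous.continuousOn
  obtain ⟨x, ⟨hxK, hfx⟩, hx⟩ := (hK.inter_right (isClosed_eq f.continuous continuous_const))
    |>.exists_isMaxOn ⟨x₁, hx₁K, rfl⟩ continuous_norm.continuousOn
  have hfmax : IsMaxOn f (⋃₀ M) x := fun y hy => (hx₁ hy).trans_eq hfx.symm
  refine ⟨x, isFreeEndpt_of_forall_notMem_openSegment hseg hxK fun a b hab hsub hxab => ?_, hfmax⟩
  obtain ⟨hfa, hfb⟩ := eq_of_mem_openSegment_of_le
    ((f : Pt →ₗ[ℝ] ℝ).apply_mem_openSegment hxab)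
    (hfmax (hsub (left_mem_segment ℝ a b))) (hfmax (hsub (right_mem_segment ℝ a b)))
  have hna : ‖a‖ ≤ ‖x‖ := hx ⟨hsub (left_mem_segment ℝ a b), hfa.trans hfx⟩
  have hnb : ‖b‖ ≤ ‖x‖ := hx ⟨hsub (right_mem_segment ℝ a b), hfb.trans hfx⟩
  obtain ⟨θ, η, hθ, hη, hθη, rfl⟩ := hxab
  exact (norm_combo_lt_of_ne hna hnb hab hθ hη hθη).false

theorem exists_isFreeEndpt_isMaxOn_lt (hfin : M.Finite) (hseg : ∀ l ∈ M, IsSeg l)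
    (f : StrongDual ℝ Pt) {t : ℝ} (hinj : InjOn f (⋃₀ M)) (hgap : ∀ y ∈ ⋃₀ M, f y ≠ t)
    (hbelow : ∃ y ∈ ⋃₀ M, f y < t) :
    ∃ x, IsFreeEndpt x M ∧ f x < t ∧ IsMaxOn f (⋃₀ M ∩ {y | f y < t}) x := by
  obtain ⟨y, hyK, hyt⟩ := hbelow
  obtain ⟨x, ⟨hxK, hxt⟩, hx⟩ := ((isCompact_sUnion_of_isSeg hfin hseg).inter_right
    (isClosed_le f.continuous continuous_const)).exists_isMaxOn ⟨y, hyK, hyt.le⟩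
    f.continuous.continuousOn
  have hxt : f x < t := hxt.lt_of_ne (hgap x hxK)
  have hxmax : IsMaxOn f (⋃₀ M ∩ {y | f y < t}) x :=
    hx.on_subset (inter_subset_inter_right _ fun _ h => show _ ≤ t from le_of_lt h)
  refine ⟨x, isFreeEndpt_of_forall_notMem_openSegment hseg hxK fun a b hab hsub hxab => ?_,
    hxt, hxmax⟩
  have hxab' := openSegment_subset_segment ℝ a b hxab
  have hle {e : Pt} (he : e ∈ segment ℝ a b) : f e ≤ f x :=
    apply_le_of_isMaxOn_of_segment_subset (f : Pt →ₗ[ℝ] ℝ) hgap hxmax hxt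
      (((convex_segment a b).segment_subset hxab' he).trans hsub)
  obtain ⟨hfa, hfb⟩ := eq_of_mem_openSegment_of_le ((f : Pt →ₗ[ℝ] ℝ).apply_mem_openSegment hxab)
    (hle (left_mem_segment ℝ a b)) (hle (right_mem_segment ℝ a b))
  exact hab (hinj (hsub (left_mem_segment ℝ a b)) (hsub (right_mem_segment ℝ a b))
    (hfa.trans hfb.symm))

theorem sUnion_subset_segment_of_isFreeEndpt (hfin : M.Finite) (hne : M.Nonempty)
    (hseg : ∀ l ∈ M, IsSeg l) {p a : Pt} (hfree : ∀ q, IsFreeEndpt q M → q = p ∨ q = a) :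
    ⋃₀ M ⊆ segment ℝ p a := fun y hy => mem_segment_of_forall_le_max fun f => by
  obtain ⟨x, hx, hmax⟩ := exists_isFreeEndpt_isMaxOn hfin hne hseg f
  rcases hfree x hx with rfl | rfl
  exacts [(hmax hy).trans (le_max_left _ _), (hmax hy).trans (le_max_right _ _)]

theorem exists_isFreeEndpt_ne_ne_of_midpoint_notMem (hfin : M.Finite) (hseg : ∀ l ∈ M, IsSeg l)
    {p a : Pt} (hp : IsFreeEndpt p M) (hc : midpoint ℝ p a ∉ ⋃₀ M) :
    ∃ q, IsFreeEndpt q M ∧ q ≠ p ∧ q ≠ a := by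
  by_contra! h
  obtain ⟨⟨l, hl, s, e, hse, rfl, hps⟩, -⟩ := hp
  have hpl : p ∈ segment ℝ s e := by
    rcases hps with rfl | rfl
    exacts [left_mem_segment ℝ _ _, right_mem_segment ℝ _ _]
  have hpK : p ∈ ⋃₀ M := ⟨_, hl, hpl⟩
  have hKseg : ⋃₀ M ⊆ segment ℝ p a := sUnion_subset_segment_of_isFreeEndpt hfin ⟨_, hl⟩ hseg
    fun q hq => or_iff_not_imp_left.mpr (h q hq)
  have hpa : p ≠ a := by
    rintro rfl
    exact hc ((midpoint_self ℝ p).symm ▸ hpK)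
  obtain ⟨f, hf⟩ := geometric_hahn_banach_point_point hpa
  have hinj := (f : Pt →ₗ[ℝ] ℝ).injOn_segment hf.ne
  set t := f (midpoint ℝ p a)
  have hgap : ∀ y ∈ ⋃₀ M, f y ≠ t := fun y hy hyt =>
    hc (hinj (hKseg hy) (midpoint_mem_segment p a) hyt ▸ hy)
  have hft : f p < t ∧ t < f a := by
    simp only [t, midpoint_eq_smul_add, map_smul, map_add, smul_eq_mul, invOf_eq_inv]
    constructor <;> linarith
  obtain ⟨x, hx, hxt, hxmax⟩ :=
    exists_isFreeEndpt_isMaxOn_lt hfin hseg f (hinj.mono hKseg) hgap ⟨p, hpK, hft.1⟩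
  obtain rfl : x = p := by
    by_contra hxp
    exact (h x hx hxp ▸ hxt).not_gt hft.2
  have hl_eq : ∀ y ∈ segment ℝ s e, y = x := fun y hy => by
    have hyK : y ∈ ⋃₀ M := ⟨_, hl, hy⟩
    have hfyx : f y ≤ f x := apply_le_of_isMaxOn_of_segment_subset (f : Pt →ₗ[ℝ] ℝ) hgap hxmax
      hxt (((convex_segment s e).segment_subset hpl hy).trans (subset_sUnion_of_mem hl))
    have hfxy : f x ≤ f y := by
      have := (f : Pt →ₗ[ℝ] ℝ).apply_mem_segment (hKseg hyK)
      rw [ContinuousLinearMap.coe_coe, segment_eq_Icc hf.le] at this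
      exact this.1
    exact hinj (hKseg hyK) (left_mem_segment ℝ x a) (le_antisymm hfyx hfxy)
  exact hse ((hl_eq s (left_mem_segment ℝ s e)).trans (hl_eq e (right_mem_segment ℝ s e)).symm)

end FreeEndpoints

theorem eq_one_or_eq_of_mem_zpowers {G : Type*} [Group G] {r g : G} (hr : r * r = 1)
    (hg : g ∈ Subgroup.zpowers r) : g = 1 ∨ g = r := by
  obtain ⟨n, rfl⟩ := Subgroup.mem_zpowers_iff.mp hg
  rw [zpow_eq_zpow_emod n (show r ^ (2 : ℤ) = 1 by rwa [zpow_two])]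
  rcases Int.emod_two_eq_zero_or_one n with h | h <;> simp [h]

theorem SatS2.finite {Γ : Subgroup Iso2} {L : Set (Set Pt)} (hΓ : (Γ : Set Iso2).Finite)
    (h : SatS2 Γ L) : L.Finite := by
  obtain ⟨T, hT, -, hgen⟩ := h
  refine ((hT.prod hΓ).image fun q : Set Pt × Iso2 => (⇑q.2) '' q.1).subset fun l hl => ?_
  obtain ⟨t, ht, g, hg, rfl⟩ := hgen l hl
  exact ⟨(t, g), ⟨ht, hg⟩, rfl⟩

/-- For `Γ` the group of order 2 generated by a half-turn `r`,
every nonempty `Γ`-invariant subset of a generic `Γ`-symmetric contact system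
has free endpoints in at least two distinct `Γ`-orbits. -/
theorem stmt_9 (r : Iso2) (hr : IsRotation r) (hr2 : r * r = 1)
    (L : Set (Set Pt)) (hL : IsGenSymmCS (Subgroup.zpowers r) L) :
    ∀ M ⊆ L, M.Nonempty →
      (∀ l ∈ M, ∀ g ∈ Subgroup.zpowers r, (⇑g) '' l ∈ M) →
      ∃ p q : Pt, IsFreeEndpt p M ∧ IsFreeEndpt q M ∧ q ≠ p ∧ q ≠ r p := by
  intro M hML hMne _
  obtain ⟨⟨⟨hsegL, -⟩, -⟩, -, hS2, hS4⟩ := hL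
  have hseg : ∀ l ∈ M, IsSeg l := fun l hl => hsegL l (hML hl)
  have hΓ : (Subgroup.zpowers r : Set Iso2).Finite :=
    (toFinite {1, r}).subset fun _ hg => eq_one_or_eq_of_mem_zpowers hr2 hg
  have hfin : M.Finite := (hS2.finite hΓ).subset hML
  obtain ⟨p, hp, -⟩ := exists_isFreeEndpt_isMaxOn hfin hMne hseg 0
  have hrr : r (r p) = p := congrArg (· p) hr2
  have hc : midpoint ℝ p (r p) ∉ ⋃₀ M := by
    rintro ⟨l, hl, hcl⟩
    refine hr.1 (hS4 l (hML hl) _ hcl r (Subgroup.mem_zpowers r) ?_)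
    rw [← r.coe_toAffineEquiv, AffineEquiv.map_midpoint, r.coe_toAffineEquiv, hrr,
      midpoint_comm]
  obtain ⟨q, hq, hqp, hqr⟩ := exists_isFreeEndpt_ne_ne_of_midpoint_notMem hfin hseg hp hc
  exact ⟨p, q, hp, hq, hqp, hqr⟩
end

section
/- Let D be a finite simple graph that is (2,3)-sparse, and let B and C be (2,3)-tight subgraphs of D such that the intersection B ∩ C (the subgraph with vertex set V(B) ∩ V(C) and edge set E(B) ∩ E(C)) contains at least one edge. Then both the union B ∪ C (vertex set V(B) ∪ V(C), edge set E(B) ∪ E(C)) and the intersection B ∩ C are (2,3)-tight. -/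
/-- The count `f(H) = 2|V(H)| - |E(H)|` of a subgraph of a simple graph. -/
noncomputable def fCount23 {V : Type*} {G : SimpleGraph V} (H : G.Subgraph) : ℤ :=
  2 * (H.verts.ncard : ℤ) - (H.edgeSet.ncard : ℤ)

/-- A simple graph is (2,3)-sparse if every subgraph `H` with at least one edge
satisfies `|E(H)| ≤ 2|V(H)| - 3`, i.e. `f(H) ≥ 3`. -/
def Sparse23 {V : Type*} (G : SimpleGraph V) : Prop :=
  ∀ H : G.Subgraph, H.edgeSet.Nonempty → 3 ≤ fCount23 H

/-- A subgraph of a (2,3)-sparse graph is (2,3)-tight (a Laman graph) if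
`f(B) = 3` or `B` is a single isolated vertex. -/
def Tight23 {V : Type*} {G : SimpleGraph V} (B : G.Subgraph) : Prop :=
  fCount23 B = 3 ∨ (∃ v, B.verts = {v} ∧ B.edgeSet = ∅)

/-- If two (2,3)-tight subgraphs of a finite (2,3)-sparse
simple graph intersect in at least one edge, then their union and intersection
are both (2,3)-tight. -/
theorem stmt_11 {V : Type*} [Fintype V] (G : SimpleGraph V) (hG : Sparse23 G)
    (B C : G.Subgraph) (hB : Tight23 B) (hC : Tight23 C)
    (hBC : (B ⊓ C).edgeSet.Nonempty) :
    Tight23 (B ⊔ C) ∧ Tight23 (B ⊓ C) := by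
  classical
  have hBCe : (B ⊓ C).edgeSet = B.edgeSet ∩ C.edgeSet := by
    ext e
    induction e using Sym2.inductionOn with
    | hf x y => simp [SimpleGraph.Subgraph.mem_edgeSet]
  have hBCu : (B ⊔ C).edgeSet = B.edgeSet ∪ C.edgeSet := by
    ext e
    induction e using Sym2.inductionOn with
    | hf x y => simp [SimpleGraph.Subgraph.mem_edgeSet]
  -- B and C have edges
  have hBne : B.edgeSet.Nonempty := by
    obtain ⟨e, he⟩ := hBC
    rw [hBCe] at he
    exact ⟨e, he.1⟩
  have hCne : C.edgeSet.Nonempty := by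
    obtain ⟨e, he⟩ := hBC
    rw [hBCe] at he
    exact ⟨e, he.2⟩
  have hfB : fCount23 B = 3 := by
    rcases hB with h | ⟨v, _, h⟩
    · exact h
    · rw [h] at hBne; exact absurd hBne (by simp)
  have hfC : fCount23 C = 3 := by
    rcases hC with h | ⟨v, _, h⟩
    · exact h
    · rw [h] at hCne; exact absurd hCne (by simp)
  have hUne : (B ⊔ C).edgeSet.Nonempty := by
    obtain ⟨e, he⟩ := hBne
    exact ⟨e, by rw [hBCu]; exact Or.inl he⟩
  have hU3 : 3 ≤ fCount23 (B ⊔ C) := hG _ hUne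
  have hI3 : 3 ≤ fCount23 (B ⊓ C) := hG _ hBC
  -- finiteness
  have hfin : ∀ s : Set V, s.Finite := fun s => Set.toFinite s
  have hfinE : ∀ s : Set (Sym2 V), s.Finite := fun s => Set.toFinite s
  -- inclusion-exclusion
  have hv : (B.verts ∪ C.verts).ncard + (B.verts ∩ C.verts).ncard
      = B.verts.ncard + C.verts.ncard :=
    Set.ncard_union_add_ncard_inter _ _ (hfin _) (hfin _)
  have hedge : (B.edgeSet ∪ C.edgeSet).ncard + (B.edgeSet ∩ C.edgeSet).ncard
      = B.edgeSet.ncard + C.edgeSet.ncard :=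
    Set.ncard_union_add_ncard_inter _ _ (hfinE _) (hfinE _)
  have hsum : fCount23 (B ⊔ C) + fCount23 (B ⊓ C) = 6 := by
    unfold fCount23
    rw [SimpleGraph.Subgraph.verts_sup, SimpleGraph.Subgraph.verts_inf, hBCu, hBCe]
    have h1 : ((B.verts ∪ C.verts).ncard : ℤ) + ((B.verts ∩ C.verts).ncard : ℤ)
        = (B.verts.ncard : ℤ) + C.verts.ncard := by exact_mod_cast hv
    have h2 : ((B.edgeSet ∪ C.edgeSet).ncard : ℤ) + ((B.edgeSet ∩ C.edgeSet).ncard : ℤ)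
        = (B.edgeSet.ncard : ℤ) + C.edgeSet.ncard := by exact_mod_cast hedge
    have hb := hfB; have hc := hfC
    unfold fCount23 at hb hc
    linarith
  constructor
  · exact Or.inl (by linarith)
  · exact Or.inl (by linarith)
end

section
/- Let G be a finite ℤ-gain graph that is (2,3,2)-sparse, and let H and K be (2,3,2)-tight subgraphs of G that are both unbalanced and satisfy V(H) ∩ V(K) ≠ ∅. Then both H ∩ K and H ∪ K are (2,3,2)-tight; moreover H ∩ K is either unbalanced or consists of a single vertex. -/
/-- A `ℤ`-gain graph: a multigraph with source and target maps together with a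
gain map into `ℤ`. -/
structure GainGraph (V : Type*) (E : Type*) where
  src : E → V
  tgt : E → V
  gain : E → ℤ

/-- A subgraph of a gain graph: subsets of vertices and edges such that the
endvertices of each chosen edge are chosen. -/
structure GainGraph.Subgraph {V E : Type*} (G : GainGraph V E) where
  verts : Set V
  edges : Set E
  src_mem : ∀ e ∈ edges, G.src e ∈ verts
  tgt_mem : ∀ e ∈ edges, G.tgt e ∈ verts

namespace GainGraph

variable {V E : Type*} {G : GainGraph V E}

/-- The union of two subgraphs, taken componentwise. -/
def Subgraph.union (H K : G.Subgraph) : G.Subgraph where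
  verts := H.verts ∪ K.verts
  edges := H.edges ∪ K.edges
  src_mem := by
    rintro e (he | he)
    exacts [Or.inl (H.src_mem e he), Or.inr (K.src_mem e he)]
  tgt_mem := by
    rintro e (he | he)
    exacts [Or.inl (H.tgt_mem e he), Or.inr (K.tgt_mem e he)]

/-- The intersection of two subgraphs, taken componentwise. -/
def Subgraph.inter (H K : G.Subgraph) : G.Subgraph where
  verts := H.verts ∩ K.verts
  edges := H.edges ∩ K.edges
  src_mem := fun e he => ⟨H.src_mem e he.1, K.src_mem e he.2⟩
  tgt_mem := fun e he => ⟨H.tgt_mem e he.1, K.tgt_mem e he.2⟩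

/-- The whole gain graph, viewed as a subgraph of itself. -/
def top (G : GainGraph V E) : G.Subgraph where
  verts := Set.univ
  edges := Set.univ
  src_mem := fun _ _ => Set.mem_univ _
  tgt_mem := fun _ _ => Set.mem_univ _

/-- Walks in a subgraph `H` of a gain graph, traversing edges of `H` either
forwards or backwards. -/
inductive Walk (G : GainGraph V E) (H : G.Subgraph) : V → V → Type _
  | nil (v : V) (hv : v ∈ H.verts) : Walk G H v v
  | fwd (e : E) (he : e ∈ H.edges) {v : V} (w : Walk G H (G.tgt e) v) :
      Walk G H (G.src e) v
  | bwd (e : E) (he : e ∈ H.edges) {v : V} (w : Walk G H (G.src e) v) :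
      Walk G H (G.tgt e) v

/-- The gain of a walk: the sum of the gains of the edges traversed forwards
minus the sum of the gains of the edges traversed backwards. -/
def Walk.gainSum {H : G.Subgraph} : ∀ {u v : V}, Walk G H u v → ℤ
  | _, _, .nil _ _ => 0
  | _, _, .fwd e _ w => G.gain e + w.gainSum
  | _, _, .bwd e _ w => -G.gain e + w.gainSum

/-- A subgraph is balanced if every closed walk in it has gain `0`. -/
def Subgraph.Balanced (H : G.Subgraph) : Prop :=
  ∀ (v : V) (w : Walk G H v v), w.gainSum = 0

/-- A subgraph is connected if it is nonempty and any two of its vertices are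
joined by a walk in it. -/
def Subgraph.Connected (H : G.Subgraph) : Prop :=
  H.verts.Nonempty ∧ ∀ u ∈ H.verts, ∀ v ∈ H.verts, Nonempty (Walk G H u v)

/-- The count `f(H) = 2|V(H)| - |E(H)|` of a subgraph. -/
noncomputable def fCount (H : G.Subgraph) : ℤ :=
  2 * (H.verts.ncard : ℤ) - (H.edges.ncard : ℤ)

/-- A gain graph is `(2,3,l)`-sparse if `f(H) ≥ l` for every nonempty
subgraph `H` and `f(K) ≥ 3` for every balanced subgraph `K` with at least one
edge. -/
def Sparse (l : ℤ) (G : GainGraph V E) : Prop :=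
  (∀ H : G.Subgraph, H.verts.Nonempty → l ≤ fCount H) ∧
  (∀ H : G.Subgraph, H.Balanced → H.edges.Nonempty → 3 ≤ fCount H)

/-- A subgraph `H` of a `(2,3,l)`-sparse gain graph is `(2,3,l)`-tight if
`f(H) = l`, or `H` is balanced with `f(H) = 3`, or `H` is a single isolated
vertex. -/
def Subgraph.Tight (l : ℤ) (H : G.Subgraph) : Prop :=
  fCount H = l ∨ (H.Balanced ∧ fCount H = 3) ∨
    (∃ v, H.verts = {v} ∧ H.edges = ∅)

end GainGraph

open GainGraph

lemma gainSum_zero {V E : Type*} {G : GainGraph V E} {H : G.Subgraph}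
    (h : H.edges = ∅) : ∀ {u v : V} (w : Walk G H u v), w.gainSum = 0
  | _, _, .nil _ _ => rfl
  | _, _, .fwd e he _ => absurd he (by simp [h])
  | _, _, .bwd e he _ => absurd he (by simp [h])

lemma balanced_of_no_edges {V E : Type*} {G : GainGraph V E} (H : G.Subgraph)
    (h : H.edges = ∅) : H.Balanced := fun _ w => gainSum_zero h w

lemma fCount_eq_two {V E : Type*} {G : GainGraph V E} (H : G.Subgraph)
    (hH : H.Tight 2) (hHu : ¬ H.Balanced) : fCount H = 2 := by
  rcases hH with h | ⟨hb, _⟩ | ⟨v, _, he⟩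
  · exact h
  · exact absurd hb hHu
  · exact absurd (balanced_of_no_edges H he) hHu

/-- In a finite `(2,3,2)`-sparse `ℤ`-gain graph, if `H` and
`K` are unbalanced `(2,3,2)`-tight subgraphs with intersecting vertex sets,
then `H ∩ K` and `H ∪ K` are `(2,3,2)`-tight, and `H ∩ K` is unbalanced or a
single vertex. -/
theorem stmt_14 {V E : Type*} [Fintype V] [Fintype E] (G : GainGraph V E)
    (hsp : Sparse 2 G) (H K : G.Subgraph)
    (hH : H.Tight 2) (hK : K.Tight 2)
    (hHu : ¬ H.Balanced) (hKu : ¬ K.Balanced)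
    (hne : (H.verts ∩ K.verts).Nonempty) :
    (H.inter K).Tight 2 ∧ (H.union K).Tight 2 ∧
      (¬ (H.inter K).Balanced ∨
        ∃ v, (H.inter K).verts = {v} ∧ (H.inter K).edges = ∅) := by
  have hH2 := fCount_eq_two H hH hHu
  have hK2 := fCount_eq_two K hK hKu
  have hv : (H.verts ∪ K.verts).ncard + (H.verts ∩ K.verts).ncard
      = H.verts.ncard + K.verts.ncard :=
    Set.ncard_union_add_ncard_inter _ _ (Set.toFinite _) (Set.toFinite _)
  have he : (H.edges ∪ K.edges).ncard + (H.edges ∩ K.edges).ncard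
      = H.edges.ncard + K.edges.ncard :=
    Set.ncard_union_add_ncard_inter _ _ (Set.toFinite _) (Set.toFinite _)
  have hv' : ((H.verts ∪ K.verts).ncard : ℤ) + (H.verts ∩ K.verts).ncard
      = H.verts.ncard + K.verts.ncard := by exact_mod_cast hv
  have he' : ((H.edges ∪ K.edges).ncard : ℤ) + (H.edges ∩ K.edges).ncard
      = H.edges.ncard + K.edges.ncard := by exact_mod_cast he
  have key : fCount (H.union K) + fCount (H.inter K) = 4 := by
    simp only [fCount, Subgraph.union, Subgraph.inter] at hH2 hK2 ⊢
    linarith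
  have hIne : (H.inter K).verts.Nonempty := hne
  have hUne : (H.union K).verts.Nonempty := by
    obtain ⟨v, hv1, _⟩ := hne
    exact ⟨v, Or.inl hv1⟩
  have h1 := hsp.1 (H.inter K) hIne
  have h2 := hsp.1 (H.union K) hUne
  have hI2 : fCount (H.inter K) = 2 := by omega
  have hU2 : fCount (H.union K) = 2 := by omega
  refine ⟨Or.inl hI2, Or.inl hU2, ?_⟩
  by_cases hb : (H.inter K).Balanced
  · right
    have hee : (H.inter K).edges = ∅ := by
      by_contra h
      have := hsp.2 (H.inter K) hb (Set.nonempty_iff_ne_empty.mpr h)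
      omega
    have : (H.inter K).verts.ncard = 1 := by
      have := hI2
      simp only [fCount, hee, Set.ncard_empty] at this
      omega
    obtain ⟨v, hv⟩ := Set.ncard_eq_one.mp this
    exact ⟨v, hv, hee⟩
  · exact Or.inl hb
end

section
/- Let G be a finite ℤ-gain graph that is (2,3,2)-sparse, and let H and K be (2,3,2)-tight subgraphs of G such that at least one of H, K is balanced and H ∩ K has at least two vertices. Then H ∪ K is (2,3,2)-tight; moreover, either H ∩ K is (2,3,2)-tight, or H ∩ K consists of exactly two isolated vertices and H ∪ K is unbalanced. -/
namespace GainGraph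

variable {V E : Type*} {G : GainGraph V E}

lemma Walk.end_mem {H : G.Subgraph} : ∀ {u v : V}, Walk G H u v → v ∈ H.verts
  | _, _, .nil _ hv => hv
  | _, _, .fwd _ _ w => w.end_mem
  | _, _, .bwd _ _ w => w.end_mem

def Walk.append {H : G.Subgraph} :
    ∀ {u v w : V}, Walk G H u v → Walk G H v w → Walk G H u w
  | _, _, _, .nil _ _, q => q
  | _, _, _, .fwd e he p, q => .fwd e he (p.append q)
  | _, _, _, .bwd e he p, q => .bwd e he (p.append q)

lemma Walk.gainSum_append {H : G.Subgraph} : ∀ {u v w : V} (p : Walk G H u v)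
    (q : Walk G H v w), (p.append q).gainSum = p.gainSum + q.gainSum
  | _, _, _, .nil _ _, q => by simp [append, gainSum]
  | _, _, _, .fwd e he p, q => by simp only [append, gainSum, gainSum_append p q]; ring
  | _, _, _, .bwd e he p, q => by simp only [append, gainSum, gainSum_append p q]; ring

def Walk.reverse {H : G.Subgraph} : ∀ {u v : V}, Walk G H u v → Walk G H v u
  | _, _, .nil v hv => .nil v hv
  | _, _, .fwd e he p => p.reverse.append (.bwd e he (.nil _ (H.src_mem e he)))
  | _, _, .bwd e he p => p.reverse.append (.fwd e he (.nil _ (H.tgt_mem e he)))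

lemma Walk.gainSum_reverse {H : G.Subgraph} : ∀ {u v : V} (p : Walk G H u v),
    p.reverse.gainSum = -p.gainSum
  | _, _, .nil _ _ => by simp [reverse, gainSum]
  | _, _, .fwd e he p => by
      simp only [reverse, gainSum, gainSum_append, gainSum_reverse p]; ring
  | _, _, .bwd e he p => by
      simp only [reverse, gainSum, gainSum_append, gainSum_reverse p]; ring

def Walk.mapLe {H K : G.Subgraph} (hV : H.verts ⊆ K.verts) (hE : H.edges ⊆ K.edges) :
    ∀ {u v : V}, Walk G H u v → Walk G K u v
  | _, _, .nil v hv => .nil v (hV hv)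
  | _, _, .fwd e he p => .fwd e (hE he) (p.mapLe hV hE)
  | _, _, .bwd e he p => .bwd e (hE he) (p.mapLe hV hE)

@[simp]
lemma Walk.gainSum_mapLe {H K : G.Subgraph} (hV : H.verts ⊆ K.verts)
    (hE : H.edges ⊆ K.edges) : ∀ {u v : V} (p : Walk G H u v),
    (p.mapLe hV hE).gainSum = p.gainSum
  | _, _, .nil _ _ => rfl
  | _, _, .fwd e he p => by simp only [mapLe, gainSum, gainSum_mapLe hV hE p]
  | _, _, .bwd e he p => by simp only [mapLe, gainSum, gainSum_mapLe hV hE p]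

namespace Subgraph

variable {H K : G.Subgraph}

lemma Balanced.mono (hK : K.Balanced) (hV : H.verts ⊆ K.verts) (hE : H.edges ⊆ K.edges) :
    H.Balanced := fun v w => by
  simpa using hK v (w.mapLe hV hE)

def IsPotential (H : G.Subgraph) (φ : V → ℤ) : Prop :=
  ∀ e ∈ H.edges, G.gain e = φ (G.tgt e) - φ (G.src e)

lemma IsPotential.gainSum_eq {φ : V → ℤ} (hφ : H.IsPotential φ) {u v : V}
    (w : Walk G H u v) : w.gainSum = φ v - φ u := by
  induction w with
  | nil v hv => simp [Walk.gainSum]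
  | fwd e he w ih => simp only [Walk.gainSum, ih, hφ e he]; ring
  | bwd e he w ih => simp only [Walk.gainSum, ih, hφ e he]; ring

lemma IsPotential.balanced {φ : V → ℤ} (hφ : H.IsPotential φ) : H.Balanced := fun _ w => by
  rw [hφ.gainSum_eq w, sub_self]

/-- On a connected balanced subgraph the gain of a walk from a base point depends only on its
endpoint, which gives a potential. -/
lemma Connected.exists_isPotential (hc : H.Connected) (hb : H.Balanced) :
    ∃ φ : V → ℤ, H.IsPotential φ := by
  classical
  obtain ⟨⟨v₀, hv₀⟩, hconn⟩ := hc
  have path_indep {u v : V} (w₁ w₂ : Walk G H u v) : w₁.gainSum = w₂.gainSum := by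
    have h := hb u (w₁.append w₂.reverse)
    rw [Walk.gainSum_append, Walk.gainSum_reverse] at h
    omega
  refine ⟨fun v => if h : v ∈ H.verts then (hconn v₀ hv₀ v h).some.gainSum else 0, ?_⟩
  intro e he
  have hs := H.src_mem e he
  have ht := H.tgt_mem e he
  have h := path_indep ((hconn v₀ hv₀ _ hs).some.append (.fwd e he (.nil _ ht)))
    (hconn v₀ hv₀ _ ht).some
  simp only [Walk.gainSum_append, Walk.gainSum] at h
  simp only [dif_pos hs, dif_pos ht]
  omega

/-- The potentials of `H` and `K` differ by a constant on the connected intersection, so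
shifting one of them glues them into a potential of `H ∪ K`. -/
lemma Balanced.union_of_connected_inter (hHb : H.Balanced) (hKb : K.Balanced)
    (hHc : H.Connected) (hKc : K.Connected) (hIc : (H.inter K).Connected) :
    (H.union K).Balanced := by
  classical
  obtain ⟨φH, hφH⟩ := hHc.exists_isPotential hHb
  obtain ⟨φK, hφK⟩ := hKc.exists_isPotential hKb
  obtain ⟨⟨x₀, hx₀⟩, hIconn⟩ := hIc
  have hconst : ∀ x ∈ H.verts ∩ K.verts, φH x - φK x = φH x₀ - φK x₀ := by
    intro x hx
    obtain ⟨w⟩ := hIconn x₀ hx₀ x hx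
    have hH := (Walk.gainSum_mapLe Set.inter_subset_left Set.inter_subset_left w).symm.trans
      (hφH.gainSum_eq _)
    have hK := (Walk.gainSum_mapLe Set.inter_subset_right Set.inter_subset_right w).symm.trans
      (hφK.gainSum_eq _)
    omega
  set φ : V → ℤ := fun x => if x ∈ H.verts then φH x else φK x + (φH x₀ - φK x₀)
  have hφ_on_K : ∀ x ∈ K.verts, φ x = φK x + (φH x₀ - φK x₀) := by
    intro x hx
    by_cases hxH : x ∈ H.verts
    · simp only [φ, if_pos hxH]; linarith [hconst x ⟨hxH, hx⟩]
    · simp only [φ, if_neg hxH]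
  refine IsPotential.balanced (φ := φ) ?_
  rintro e (he | he)
  · simp only [φ, if_pos (H.src_mem e he), if_pos (H.tgt_mem e he)]
    exact hφH e he
  · rw [hφ_on_K _ (K.src_mem e he), hφ_on_K _ (K.tgt_mem e he), hφK e he]
    ring

def component (H : G.Subgraph) (v : V) : G.Subgraph where
  verts := {u | Nonempty (Walk G H v u)}
  edges := {e | e ∈ H.edges ∧ Nonempty (Walk G H v (G.src e))}
  src_mem := fun _ he => he.2
  tgt_mem := fun e he => he.2.elim fun w =>
    ⟨w.append (.fwd e he.1 (.nil _ (H.tgt_mem e he.1)))⟩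

def deleteComponent (H : G.Subgraph) (v : V) : G.Subgraph where
  verts := H.verts \ (H.component v).verts
  edges := H.edges \ (H.component v).edges
  src_mem := fun e he => ⟨H.src_mem e he.1, fun hw => he.2 ⟨he.1, hw⟩⟩
  tgt_mem := fun e he => ⟨H.tgt_mem e he.1, fun hw =>
    he.2 ⟨he.1, hw.elim fun w => ⟨w.append (.bwd e he.1 (.nil _ (H.src_mem e he.1)))⟩⟩⟩

lemma component_verts_subset (H : G.Subgraph) (v : V) : (H.component v).verts ⊆ H.verts :=
  fun _ ⟨w⟩ => w.end_mem

lemma component_edges_subset (H : G.Subgraph) (v : V) : (H.component v).edges ⊆ H.edges :=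
  fun _ he => he.1

lemma exists_component_nonempty_of_not_connected (hne : H.verts.Nonempty)
    (hnc : ¬ H.Connected) :
    ∃ u, (H.component u).verts.Nonempty ∧ (H.deleteComponent u).verts.Nonempty := by
  simp only [Connected, hne, true_and, not_forall, not_nonempty_iff] at hnc
  obtain ⟨u, hu, v, hv, hw⟩ := hnc
  exact ⟨u, ⟨u, ⟨.nil u hu⟩⟩, v, hv, not_nonempty_iff.mpr hw⟩

end Subgraph

open Subgraph

lemma fCount_eq_of_edges_eq_empty {H : G.Subgraph} (h : H.edges = ∅) :
    fCount H = 2 * H.verts.ncard := by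
  simp [fCount, h]

lemma fCount_union_add_fCount_inter [Finite V] [Finite E] (H K : G.Subgraph) :
    fCount (H.union K) + fCount (H.inter K) = fCount H + fCount K := by
  have hV := Set.ncard_union_add_ncard_inter H.verts K.verts
  have hE := Set.ncard_union_add_ncard_inter H.edges K.edges
  simp only [fCount, Subgraph.union, Subgraph.inter]
  omega

lemma fCount_component_add_fCount_deleteComponent [Finite V] [Finite E] (H : G.Subgraph)
    (v : V) : fCount (H.component v) + fCount (H.deleteComponent v) = fCount H := by
  have hV := Set.ncard_sdiff_add_ncard_of_subset (H.component_verts_subset v)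
  have hE := Set.ncard_sdiff_add_ncard_of_subset (H.component_edges_subset v)
  simp only [fCount, deleteComponent]
  omega

namespace Sparse

variable {l : ℤ} {H : G.Subgraph}

lemma three_le_fCount_of_balanced (hsp : Sparse l G) (hb : H.Balanced)
    (hcard : 2 ≤ H.verts.ncard) : 3 ≤ fCount H := by
  rcases H.edges.eq_empty_or_nonempty with h | h
  · rw [fCount_eq_of_edges_eq_empty h]
    omega
  · exact hsp.2 H hb h

lemma eq_singleton_of_balanced [Finite V] (hsp : Sparse l G) (hb : H.Balanced)
    (hne : H.verts.Nonempty) (hf : fCount H ≤ 2) : ∃ v, H.verts = {v} ∧ H.edges = ∅ := by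
  have hE : H.edges = ∅ := by
    by_contra h
    have := hsp.2 H hb (Set.nonempty_iff_ne_empty.2 h)
    omega
  have hpos := (Set.ncard_pos H.verts.toFinite).2 hne
  rw [fCount_eq_of_edges_eq_empty hE] at hf
  obtain ⟨v, hv⟩ := Set.ncard_eq_one.1 (show H.verts.ncard = 1 by omega)
  exact ⟨v, hv, hE⟩

lemma connected_of_fCount_le_three [Finite V] [Finite E] (hsp : Sparse 2 G)
    (hne : H.verts.Nonempty) (hf : fCount H ≤ 3) : H.Connected := by
  by_contra hnc
  obtain ⟨u, hC, hD⟩ := exists_component_nonempty_of_not_connected hne hnc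
  have := fCount_component_add_fCount_deleteComponent H u
  linarith [hsp.1 _ hC, hsp.1 _ hD]

lemma eq_pair_of_not_connected [Finite V] [Finite E] (hsp : Sparse 2 G) (hb : H.Balanced)
    (hne : H.verts.Nonempty) (hnc : ¬ H.Connected) (hf : fCount H ≤ 4) :
    ∃ a b, a ≠ b ∧ H.verts = {a, b} ∧ H.edges = ∅ := by
  obtain ⟨u, hC, hD⟩ := exists_component_nonempty_of_not_connected hne hnc
  have hsum := fCount_component_add_fCount_deleteComponent H u
  have hC2 := hsp.1 _ hC
  have hD2 := hsp.1 _ hD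
  obtain ⟨a, haV, haE⟩ := hsp.eq_singleton_of_balanced
    (hb.mono (H.component_verts_subset u) (H.component_edges_subset u)) hC (by omega)
  obtain ⟨b, hbV, hbE⟩ := hsp.eq_singleton_of_balanced
    (hb.mono Set.sdiff_subset Set.sdiff_subset) hD (by omega)
  have hab : a ≠ b := by
    have haC : a ∈ (H.component u).verts := haV ▸ rfl
    have hbD : b ∈ (H.deleteComponent u).verts := hbV ▸ rfl
    rintro rfl
    exact hbD.2 haC
  refine ⟨a, b, hab, ?_, ?_⟩
  · rw [← Set.union_sdiff_cancel (H.component_verts_subset u)]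
    change (H.component u).verts ∪ (H.deleteComponent u).verts = _
    rw [haV, hbV, Set.singleton_union]
  · rw [← Set.union_sdiff_cancel (H.component_edges_subset u)]
    change (H.component u).edges ∪ (H.deleteComponent u).edges = _
    rw [haE, hbE, Set.union_empty]

end Sparse

lemma Subgraph.edges_nonempty_of_fCount_eq_three {H : G.Subgraph} (hf : fCount H = 3) :
    H.edges.Nonempty := by
  rw [Set.nonempty_iff_ne_empty]
  intro h
  rw [fCount_eq_of_edges_eq_empty h] at hf
  omega

lemma Subgraph.Tight.fCount_eq_of_two_le_ncard {l : ℤ} {H : G.Subgraph} (hH : H.Tight l)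
    (hcard : 2 ≤ H.verts.ncard) : fCount H = l ∨ (H.Balanced ∧ fCount H = 3) := by
  rcases hH with h | h | ⟨v, hv, -⟩
  · exact Or.inl h
  · exact Or.inr h
  · simp [hv] at hcard

lemma Sparse.tight_union_inter_of_balanced [Finite V] [Finite E] {H K : G.Subgraph}
    (hsp : Sparse 2 G) (hHb : H.Balanced) (hKb : K.Balanced) (hHf : fCount H = 3)
    (hKf : fCount K = 3) (hcard : 2 ≤ (H.verts ∩ K.verts).ncard) :
    (H.union K).Tight 2 ∧
      ((H.inter K).Tight 2 ∨
        ((∃ u v : V, u ≠ v ∧ (H.inter K).verts = {u, v}) ∧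
          (H.inter K).edges = ∅ ∧ ¬ (H.union K).Balanced)) := by
  have hIne : (H.verts ∩ K.verts).Nonempty := Set.nonempty_of_ncard_ne_zero (by omega)
  have hIbal : (H.inter K).Balanced := hHb.mono Set.inter_subset_left Set.inter_subset_left
  have hI3 := hsp.three_le_fCount_of_balanced hIbal hcard
  have hU2 := hsp.1 (H.union K) (hIne.mono fun _ hx => Or.inl hx.1)
  have hsum := fCount_union_add_fCount_inter H K
  have hUE : (H.union K).edges.Nonempty :=
    (H.edges_nonempty_of_fCount_eq_three hHf).mono fun _ => Or.inl
  by_cases hIc : (H.inter K).Connected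
  · have hUb := hHb.union_of_connected_inter hKb
      (hsp.connected_of_fCount_le_three (hIne.mono fun _ hx => hx.1) hHf.le)
      (hsp.connected_of_fCount_le_three (hIne.mono fun _ hx => hx.2) hKf.le) hIc
    have hU3 := hsp.2 _ hUb hUE
    have hUf : fCount (H.union K) = 3 := by omega
    have hIf : fCount (H.inter K) = 3 := by omega
    exact ⟨Or.inr (Or.inl ⟨hUb, hUf⟩), Or.inl (Or.inr (Or.inl ⟨hIbal, hIf⟩))⟩
  · obtain ⟨a, b, hab, hIV, hIE⟩ := hsp.eq_pair_of_not_connected hIbal hIne hIc (by omega)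
    have hI4 : fCount (H.inter K) = 4 := by
      rw [fCount_eq_of_edges_eq_empty hIE, hIV, Set.ncard_pair hab]
      rfl
    have hUf : fCount (H.union K) = 2 := by omega
    have hUb : ¬ (H.union K).Balanced := fun hUb => by
      have hU3 := hsp.2 _ hUb hUE
      omega
    exact ⟨Or.inl hUf, Or.inr ⟨⟨a, b, hab, hIV⟩, hIE, hUb⟩⟩

end GainGraph

open GainGraph

/-- In a finite `(2,3,2)`-sparse `ℤ`-gain graph, if `H` and
`K` are `(2,3,2)`-tight subgraphs, at least one of which is balanced, whose
intersection has at least two vertices, then `H ∪ K` is `(2,3,2)`-tight, and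
either `H ∩ K` is `(2,3,2)`-tight or `H ∩ K` consists of exactly two isolated
vertices and `H ∪ K` is unbalanced. -/
theorem stmt_15 {V E : Type*} [Fintype V] [Fintype E] (G : GainGraph V E)
    (hsp : Sparse 2 G) (H K : G.Subgraph)
    (hH : H.Tight 2) (hK : K.Tight 2)
    (hbal : H.Balanced ∨ K.Balanced)
    (hcard : 2 ≤ (H.verts ∩ K.verts).ncard) :
    (H.union K).Tight 2 ∧
      ((H.inter K).Tight 2 ∨
        ((∃ u v : V, u ≠ v ∧ (H.inter K).verts = {u, v}) ∧
          (H.inter K).edges = ∅ ∧ ¬ (H.union K).Balanced)) := by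
  have hHcard := hcard.trans (Set.ncard_le_ncard Set.inter_subset_left)
  have hKcard := hcard.trans (Set.ncard_le_ncard Set.inter_subset_right)
  have hIne : (H.verts ∩ K.verts).Nonempty := Set.nonempty_of_ncard_ne_zero (by omega)
  have hIbal : (H.inter K).Balanced := hbal.elim
    (·.mono Set.inter_subset_left Set.inter_subset_left)
    (·.mono Set.inter_subset_right Set.inter_subset_right)
  have hI3 := hsp.three_le_fCount_of_balanced hIbal hcard
  have hU2 := hsp.1 (H.union K) (hIne.mono fun _ hx => Or.inl hx.1)
  have hsum := fCount_union_add_fCount_inter H K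
  have hItight : fCount (H.inter K) = 3 → (H.inter K).Tight 2 :=
    fun hf => Or.inr (Or.inl ⟨hIbal, hf⟩)
  rcases hH.fCount_eq_of_two_le_ncard hHcard with hHf | ⟨hHb, hHf⟩ <;>
    rcases hK.fCount_eq_of_two_le_ncard hKcard with hKf | ⟨hKb, hKf⟩
  · omega
  · exact ⟨Or.inl (by omega), Or.inl (hItight (by omega))⟩
  · exact ⟨Or.inl (by omega), Or.inl (hItight (by omega))⟩
  · exact hsp.tight_union_inter_of_balanced hHb hKb hHf hKf hcard
end
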